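/- arXiv:2105.11441 — 5 statements merged into one kernel-verified Lean document; each statement's English description precedes it below -/
import Mathlib

section
/- Let p ≥ 1 be a real number and a ∈ (0,1). With K = [0,1] and L = [0,2] in ℝ¹, there exists λ ∈ (0,1) such that G₁((1-λ)·K +_p λ·L + (-1,a]) < ((1-λ)·G₁(K)^p + λ·G₁(L)^p)^{1/p} = ((1-λ)·2^p + λ·3^p)^{1/p}. In particular, the open cube (-1,1)ⁿ in the discrete L_p Brunn–Minkowski inequality cannot be replaced by the smaller set (-1,a]ⁿ. -/
open scoped Pointwise

/-- The `L_p` sum of two sets (Lutwak–Yang–Zhang pointwise definition); for `p = 1`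
it is the Minkowski sum. -/
noncomputable def pSum {E : Type*} [AddCommGroup E] [Module ℝ E] (p : ℝ) (K L : Set E) :
    Set E :=
  if p = 1 then K + L
  else {w | ∃ x ∈ K, ∃ y ∈ L, ∃ μ ∈ Set.Icc (0 : ℝ) 1,
    w = ((1 - μ) ^ (1 - 1 / p) : ℝ) • x + ((μ : ℝ) ^ (1 - 1 / p) : ℝ) • y}

/-- The `L_p` scalar multiplication `t · K = t^{1/p} K`. -/
noncomputable def pSmul {E : Type*} [AddCommGroup E] [Module ℝ E] (p t : ℝ) (K : Set E) :
    Set E :=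
  ((t : ℝ) ^ (1 / p : ℝ)) • K

/-- The lattice point enumerator in dimension 1: `G₁(M) = |M ∩ ℤ|`. -/
noncomputable def latG1 (M : Set ℝ) : ℕ := (M ∩ Set.range ((↑) : ℤ → ℝ)).ncard

lemma icc01_inter : Set.Icc (0:ℝ) 1 ∩ Set.range ((↑) : ℤ → ℝ) = {0, 1} := by
  ext x
  constructor
  · rintro ⟨⟨h0, h1⟩, n, rfl⟩
    have h0' : (0:ℤ) ≤ n := by exact_mod_cast h0
    have h1' : n ≤ 1 := by exact_mod_cast h1
    interval_cases n <;> simp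
  · rintro (rfl | rfl)
    · exact ⟨by norm_num, 0, by norm_num⟩
    · exact ⟨by norm_num, 1, by norm_num⟩

lemma icc02_inter : Set.Icc (0:ℝ) 2 ∩ Set.range ((↑) : ℤ → ℝ) = {0, 1, 2} := by
  ext x
  constructor
  · rintro ⟨⟨h0, h1⟩, n, rfl⟩
    have h0' : (0:ℤ) ≤ n := by exact_mod_cast h0
    have h1' : n ≤ 2 := by exact_mod_cast h1
    interval_cases n <;> simp
  · rintro (rfl | rfl | rfl)
    · exact ⟨by norm_num, 0, by norm_num⟩
    · exact ⟨by norm_num, 1, by norm_num⟩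
    · exact ⟨by norm_num, 2, by norm_num⟩

lemma latG1_Icc01 : latG1 (Set.Icc (0:ℝ) 1) = 2 := by
  unfold latG1
  rw [icc01_inter]
  exact Set.ncard_pair (by norm_num)

lemma latG1_Icc02 : latG1 (Set.Icc (0:ℝ) 2) = 3 := by
  unfold latG1
  rw [icc02_inter, Set.ncard_insert_of_notMem (by norm_num)
    (Set.Finite.insert _ (Set.finite_singleton _)), Set.ncard_pair (by norm_num)]

/-- The cube `(-1,1)ⁿ` in the discrete `L_p` Brunn–Minkowski inequality cannot be
reduced to `(-1,a]ⁿ` with `a ∈ (0,1)`: a one-dimensional counterexample with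
`K = [0,1]`, `L = [0,2]`. -/
theorem cube_cannot_be_reduced (p a : ℝ) (hp : 1 ≤ p) (ha : a ∈ Set.Ioo (0 : ℝ) 1) :
    ∃ lam ∈ Set.Ioo (0 : ℝ) 1,
      (latG1 (pSum p (pSmul p (1 - lam) (Set.Icc (0 : ℝ) 1))
            (pSmul p lam (Set.Icc (0 : ℝ) 2)) + Set.Ioc (-1 : ℝ) a) : ℝ) <
          ((1 - lam) * (latG1 (Set.Icc (0 : ℝ) 1) : ℝ) ^ p
            + lam * (latG1 (Set.Icc (0 : ℝ) 2) : ℝ) ^ p) ^ (1 / p) ∧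
        ((1 - lam) * (latG1 (Set.Icc (0 : ℝ) 1) : ℝ) ^ p
            + lam * (latG1 (Set.Icc (0 : ℝ) 2) : ℝ) ^ p) ^ (1 / p) =
          ((1 - lam) * 2 ^ p + lam * 3 ^ p) ^ (1 / p) := by
  obtain ⟨ha0, ha1⟩ := ha
  have hp0 : (0:ℝ) < p := lt_of_lt_of_le one_pos hp
  have hip : (0:ℝ) < 1 / p := by positivity
  have hip1 : 1 / p ≤ 1 := by
    rw [div_le_one hp0]; exact hp
  set x : ℝ := (1 - a) / 4 with hxdef
  have hx0 : 0 < x := by simp only [hxdef]; linarith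
  have hx1 : x < 1 := by simp only [hxdef]; linarith
  set lam : ℝ := x ^ p with hlamdef
  have hlam0 : 0 < lam := Real.rpow_pos_of_pos hx0 p
  have hlam1 : lam < 1 := Real.rpow_lt_one hx0.le hx1 hp0
  have hroot : lam ^ (1/p) = x := by
    rw [hlamdef, ← Real.rpow_mul hx0.le, mul_one_div_cancel hp0.ne', Real.rpow_one]
  have h1lam : (1 - lam) ^ (1/p) ≤ 1 :=
    Real.rpow_le_one (by linarith) (by linarith) hip.le
  -- upper bound on elements of the p-sum
  have hbound : ∀ w ∈ pSum p (pSmul p (1 - lam) (Set.Icc (0 : ℝ) 1))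
      (pSmul p lam (Set.Icc (0 : ℝ) 2)), 0 ≤ w ∧ w ≤ (1 - lam) ^ (1/p) + 2 * lam ^ (1/p) := by
    intro w hw
    have hc1 : (0:ℝ) ≤ (1 - lam) ^ (1/p) := Real.rpow_nonneg (by linarith) _
    have hc2 : (0:ℝ) ≤ lam ^ (1/p) := Real.rpow_nonneg hlam0.le _
    unfold pSum at hw
    by_cases hp1 : p = 1
    · rw [if_pos hp1] at hw
      obtain ⟨xw, hxw, yw, hyw, rfl⟩ := Set.mem_add.1 hw
      obtain ⟨x0, ⟨hx0l, hx0r⟩, rfl⟩ := hxw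
      obtain ⟨y0, ⟨hy0l, hy0r⟩, rfl⟩ := hyw
      simp only [smul_eq_mul]
      constructor
      · positivity
      · nlinarith [mul_le_mul_of_nonneg_left hx0r hc1, mul_le_mul_of_nonneg_left hy0r hc2]
    · rw [if_neg hp1] at hw
      obtain ⟨xw, hxw, yw, hyw, μ, ⟨hμ0, hμ1⟩, rfl⟩ := hw
      obtain ⟨x0, ⟨hx0l, hx0r⟩, rfl⟩ := hxw
      obtain ⟨y0, ⟨hy0l, hy0r⟩, rfl⟩ := hyw
      have he : (0:ℝ) ≤ 1 - 1/p := by linarith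
      have hd1 : (0:ℝ) ≤ (1 - μ) ^ (1 - 1/p) := Real.rpow_nonneg (by linarith) _
      have hd1' : (1 - μ) ^ (1 - 1/p) ≤ 1 := Real.rpow_le_one (by linarith) (by linarith) he
      have hd2 : (0:ℝ) ≤ μ ^ (1 - 1/p) := Real.rpow_nonneg hμ0 _
      have hd2' : μ ^ (1 - 1/p) ≤ 1 := Real.rpow_le_one hμ0 hμ1 he
      simp only [smul_eq_mul]
      have hxw0 : 0 ≤ (1 - lam) ^ (1/p) * x0 := by positivity
      have hyw0 : 0 ≤ lam ^ (1/p) * y0 := by positivity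
      have hxwB : (1 - lam) ^ (1/p) * x0 ≤ (1 - lam) ^ (1/p) :=
        mul_le_of_le_one_right hc1 hx0r
      have hywB : lam ^ (1/p) * y0 ≤ 2 * lam ^ (1/p) := by nlinarith
      constructor
      · positivity
      · nlinarith [mul_le_mul_of_nonneg_right hd1' hxw0, mul_le_mul_of_nonneg_right hd2' hyw0]
  -- the shifted set contains only the integers 0 and 1
  have hsub : (pSum p (pSmul p (1 - lam) (Set.Icc (0 : ℝ) 1))
      (pSmul p lam (Set.Icc (0 : ℝ) 2)) + Set.Ioc (-1 : ℝ) a) ∩ Set.range ((↑) : ℤ → ℝ)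
      ⊆ {0, 1} := by
    rintro z ⟨hz, n, rfl⟩
    obtain ⟨w, hw, u, ⟨hu1, hu2⟩, hwu⟩ := Set.mem_add.1 hz
    obtain ⟨hw0, hwB⟩ := hbound w hw
    have hB : (1 - lam) ^ (1/p) + 2 * lam ^ (1/p) ≤ 1 + 2 * x := by
      rw [hroot]; linarith
    have hlt2 : (n:ℝ) < 2 := by
      rw [← hwu]
      have : (1:ℝ) + 2 * x + a < 2 := by simp only [hxdef]; linarith
      linarith
    have hgt : (-1:ℝ) < (n:ℝ) := by rw [← hwu]; linarith
    have hgt' : (-1:ℤ) < n := by exact_mod_cast hgt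
    have hlt2' : n < 2 := by exact_mod_cast hlt2
    have hn0 : (0:ℤ) ≤ n := by omega
    have hn1 : n ≤ 1 := by omega
    interval_cases n <;> simp
  have hcard : (latG1 (pSum p (pSmul p (1 - lam) (Set.Icc (0 : ℝ) 1))
      (pSmul p lam (Set.Icc (0 : ℝ) 2)) + Set.Ioc (-1 : ℝ) a) : ℝ) ≤ 2 := by
    have h2 : latG1 (pSum p (pSmul p (1 - lam) (Set.Icc (0 : ℝ) 1))
        (pSmul p lam (Set.Icc (0 : ℝ) 2)) + Set.Ioc (-1 : ℝ) a) ≤ 2 := by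
      unfold latG1
      calc _ ≤ ({0, 1} : Set ℝ).ncard :=
            Set.ncard_le_ncard hsub (Set.Finite.insert _ (Set.finite_singleton _))
        _ = 2 := Set.ncard_pair (by norm_num)
    exact_mod_cast h2
  -- RHS is bigger than 2
  have hrhs : (2:ℝ) < ((1 - lam) * 2 ^ p + lam * 3 ^ p) ^ (1 / p) := by
    have h23 : (2:ℝ) ^ p < 3 ^ p := Real.rpow_lt_rpow (by norm_num) (by norm_num) hp0
    have h2p : (0:ℝ) < 2 ^ p := Real.rpow_pos_of_pos (by norm_num) p
    have hin : (2:ℝ) ^ p < (1 - lam) * 2 ^ p + lam * 3 ^ p := by nlinarith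
    calc (2:ℝ) = ((2:ℝ) ^ p) ^ (1/p) := by
          rw [← Real.rpow_mul (by norm_num : (0:ℝ) ≤ 2), mul_one_div_cancel hp0.ne',
            Real.rpow_one]
      _ < _ := Real.rpow_lt_rpow h2p.le hin hip
  refine ⟨lam, ⟨hlam0, hlam1⟩, ?_, ?_⟩
  · rw [latG1_Icc01, latG1_Icc02]
    push_cast
    exact lt_of_le_of_lt hcard hrhs
  · rw [latG1_Icc01, latG1_Icc02]
    norm_num
end

section
/- With K = [0,1] and L = [0,2] in ℝ¹ and p = 2, one has G₁((1/2)·K +₂ (1/2)·L +₂ (-1,1)) ≤ 2 < √(6.5) = ((1/2)·G₁(K)² + (1/2)·G₁(L)²)^{1/2}, where +₂ denotes the 2-sum of sets. In particular, the Minkowski addition of the cube (-1,1)ⁿ in the discrete L_p Brunn–Minkowski inequality cannot be replaced by the p-sum of that cube. -/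
open scoped Pointwise

lemma rpow_half_sq {a : ℝ} (ha : 0 ≤ a) : (a ^ ((1:ℝ) - 1/2)) ^ 2 = a := by
  rw [← Real.rpow_natCast (a ^ ((1:ℝ) - 1/2)) 2, ← Real.rpow_mul ha]; norm_num

lemma cauchy_inner {c d X Y : ℝ} (hc : 0 ≤ c) (hd : 0 ≤ d) (hcd : c ^ 2 + d ^ 2 = 1)
    (hX0 : 0 ≤ X) (hX : X ^ 2 ≤ 1/2) (hY0 : 0 ≤ Y) (hY : Y ^ 2 ≤ 2) :
    0 ≤ c * X + d * Y ∧ (c * X + d * Y) ^ 2 ≤ 5/2 := by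
  constructor
  · positivity
  · nlinarith [sq_nonneg (c * Y - d * X)]

lemma cauchy_outer {s t w z : ℝ} (hs : 0 ≤ s) (ht : 0 ≤ t) (hst : s ^ 2 + t ^ 2 = 1)
    (hw0 : 0 ≤ w) (hw2 : w ^ 2 ≤ 5/2) (hz1 : -1 < z) (hz2 : z < 1) :
    -1 < s * w + t * z ∧ s * w + t * z < 2 := by
  have ht1 : t ≤ 1 := by nlinarith
  constructor
  · have htz : -1 < t * z := by
      nlinarith [mul_nonneg ht (by linarith : (0:ℝ) ≤ z + 1),
        mul_nonneg (by linarith : (0:ℝ) ≤ 1 - t) (by linarith : (0:ℝ) ≤ 1 - z)]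
    nlinarith [mul_nonneg hs hw0]
  · have h1 : t * z ≤ t := by nlinarith [mul_nonneg ht (by linarith : (0:ℝ) ≤ 1 - z)]
    have h2 : (s * w + t) ^ 2 ≤ 7/2 := by nlinarith [sq_nonneg (s - t * w)]
    have h3 : 0 ≤ s * w + t := by positivity
    nlinarith

lemma subset_Ioo' : pSum 2 (pSum 2 (pSmul 2 (1 / 2) (Set.Icc (0 : ℝ) 1))
      (pSmul 2 (1 / 2) (Set.Icc (0 : ℝ) 2))) (Set.Ioo (-1 : ℝ) 1) ⊆ Set.Ioo (-1 : ℝ) 2 := by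
  have h2 : (2:ℝ) ≠ 1 := by norm_num
  intro v hv
  rw [pSum, if_neg h2] at hv
  obtain ⟨w, hw, z, hz, ν, hν, rfl⟩ := hv
  rw [pSum, if_neg h2] at hw
  obtain ⟨x, hx, y, hy, μ, hμ, rfl⟩ := hw
  rw [pSmul, Set.mem_smul_set] at hx hy
  obtain ⟨x₀, ⟨hx1, hx2⟩, rfl⟩ := hx
  obtain ⟨y₀, ⟨hy1, hy2⟩, rfl⟩ := hy
  obtain ⟨hμ0, hμ1⟩ := hμ
  obtain ⟨hν0, hν1⟩ := hν
  obtain ⟨hz1, hz2⟩ := hz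
  simp only [smul_eq_mul]
  have he0 : 0 ≤ ((1:ℝ)/2) ^ ((1:ℝ)/(2:ℝ)) := Real.rpow_nonneg (by norm_num) _
  have he2 : (((1:ℝ)/2) ^ ((1:ℝ)/(2:ℝ))) ^ 2 = 1/2 := by
    rw [show (1:ℝ)/(2:ℝ) = (1:ℝ) - 1/2 by norm_num]
    exact rpow_half_sq (by norm_num)
  have hX0 : 0 ≤ ((1:ℝ)/2) ^ ((1:ℝ)/(2:ℝ)) * x₀ := by positivity
  have hX : (((1:ℝ)/2) ^ ((1:ℝ)/(2:ℝ)) * x₀) ^ 2 ≤ 1/2 := by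
    rw [mul_pow, he2]; nlinarith
  have hY0 : 0 ≤ ((1:ℝ)/2) ^ ((1:ℝ)/(2:ℝ)) * y₀ := by positivity
  have hY : (((1:ℝ)/2) ^ ((1:ℝ)/(2:ℝ)) * y₀) ^ 2 ≤ 2 := by
    rw [mul_pow, he2]; nlinarith
  have hc0 : 0 ≤ (1 - μ) ^ ((1:ℝ) - 1/2) := Real.rpow_nonneg (by linarith) _
  have hd0 : 0 ≤ μ ^ ((1:ℝ) - 1/2) := Real.rpow_nonneg hμ0 _
  have hcd : ((1 - μ) ^ ((1:ℝ) - 1/2)) ^ 2 + (μ ^ ((1:ℝ) - 1/2)) ^ 2 = 1 := by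
    rw [rpow_half_sq (by linarith), rpow_half_sq hμ0]; ring
  obtain ⟨hw0, hw2⟩ := cauchy_inner hc0 hd0 hcd hX0 hX hY0 hY
  have hs0 : 0 ≤ (1 - ν) ^ ((1:ℝ) - 1/2) := Real.rpow_nonneg (by linarith) _
  have ht0 : 0 ≤ ν ^ ((1:ℝ) - 1/2) := Real.rpow_nonneg hν0 _
  have hst : ((1 - ν) ^ ((1:ℝ) - 1/2)) ^ 2 + (ν ^ ((1:ℝ) - 1/2)) ^ 2 = 1 := by
    rw [rpow_half_sq (by linarith), rpow_half_sq hν0]; ring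
  exact cauchy_outer hs0 ht0 hst hw0 hw2 hz1 hz2

/-- The Minkowski addition of the cube `(-1,1)ⁿ` in the discrete `L_p`
Brunn–Minkowski inequality cannot be replaced by its `p`-sum: a one-dimensional
counterexample with `K = [0,1]`, `L = [0,2]` and `p = 2`. -/
theorem cube_pSum_counterexample :
    latG1 (pSum 2 (pSum 2 (pSmul 2 (1 / 2) (Set.Icc (0 : ℝ) 1))
          (pSmul 2 (1 / 2) (Set.Icc (0 : ℝ) 2))) (Set.Ioo (-1 : ℝ) 1)) ≤ 2 ∧
      (2 : ℝ) < Real.sqrt 6.5 ∧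
      Real.sqrt 6.5 =
        ((1 / 2) * (latG1 (Set.Icc (0 : ℝ) 1) : ℝ) ^ 2
          + (1 / 2) * (latG1 (Set.Icc (0 : ℝ) 2) : ℝ) ^ 2) ^ ((1 : ℝ) / 2) := by
  refine ⟨?_, ?_, ?_⟩
  · have hsub : (pSum 2 (pSum 2 (pSmul 2 (1 / 2) (Set.Icc (0 : ℝ) 1))
          (pSmul 2 (1 / 2) (Set.Icc (0 : ℝ) 2))) (Set.Ioo (-1 : ℝ) 1)
        ∩ Set.range ((↑) : ℤ → ℝ)) ⊆ ({0, 1} : Set ℝ) := by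
      rintro v ⟨hv, n, rfl⟩
      obtain ⟨h1, h2⟩ := subset_Ioo' hv
      have hn1 : (-1:ℤ) < n := by exact_mod_cast h1
      have hn2 : n < 2 := by exact_mod_cast h2
      interval_cases n <;> simp
    calc latG1 _ ≤ (({0, 1} : Set ℝ)).ncard :=
          Set.ncard_le_ncard hsub (Set.toFinite _)
      _ = 2 := Set.ncard_pair (by norm_num)
  · rw [show (2:ℝ) = Real.sqrt 4 by
      rw [show (4:ℝ) = 2^2 by norm_num, Real.sqrt_sq (by norm_num)]]
    exact Real.sqrt_lt_sqrt (by norm_num) (by norm_num)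
  · have h1 : latG1 (Set.Icc (0 : ℝ) 1) = 2 := by
      have he : Set.Icc (0 : ℝ) 1 ∩ Set.range ((↑) : ℤ → ℝ) = {(0:ℝ), 1} := by
        ext v
        constructor
        · rintro ⟨⟨ha, hb⟩, n, rfl⟩
          have hn1 : (0:ℤ) ≤ n := by exact_mod_cast ha
          have hn2 : n ≤ 1 := by exact_mod_cast hb
          interval_cases n <;> simp
        · rintro (rfl | rfl)
          · exact ⟨by norm_num, 0, by norm_num⟩
          · exact ⟨by norm_num, 1, by norm_num⟩
      rw [latG1, he, Set.ncard_pair (by norm_num)]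
    have h2 : latG1 (Set.Icc (0 : ℝ) 2) = 3 := by
      have he : Set.Icc (0 : ℝ) 2 ∩ Set.range ((↑) : ℤ → ℝ) = {(0:ℝ), 1, 2} := by
        ext v
        constructor
        · rintro ⟨⟨ha, hb⟩, n, rfl⟩
          have hn1 : (0:ℤ) ≤ n := by exact_mod_cast ha
          have hn2 : n ≤ 2 := by exact_mod_cast hb
          interval_cases n <;> simp
        · rintro (rfl | rfl | rfl)
          · exact ⟨by norm_num, 0, by norm_num⟩
          · exact ⟨by norm_num, 1, by norm_num⟩
          · exact ⟨by norm_num, 2, by norm_num⟩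
      rw [latG1, he]
      rw [Set.ncard_insert_of_notMem (by norm_num), Set.ncard_pair (by norm_num)]
    rw [h1, h2, Real.sqrt_eq_rpow]
    norm_num
end

section
/- Let a, b be positive integers with a ≤ b, and set A = {0,1,…,a} and B = {0,1,…,b} in ℤ. Then there exists p₀ > 1 such that for every real p with 1 < p < p₀, G₁(A +_p B + [0,1]) < (|A|^p + |B|^p)^{1/p} = ((a+1)^p + (b+1)^p)^{1/p}. In particular, the cube (-1,2)ⁿ in the inequality G(A +_p B + (-1,2)ⁿ)^{p/n} ≥ |A|^{p/n} + |B|^{p/n} cannot in general be replaced by [0,1]ⁿ. -/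
open scoped Pointwise

lemma ncard_cast_Icc (n : ℕ) :
    ((((↑) : ℤ → ℝ) '' Set.Icc (0 : ℤ) (n : ℤ)).ncard : ℝ) = n + 1 := by
  rw [Set.ncard_image_of_injective _ Int.cast_injective, ← Finset.coe_Icc,
    Set.ncard_coe_finset, Int.card_Icc]
  simp

/-- The cube `(-1,2)ⁿ` in the discrete `L_p` Brunn–Minkowski inequality for
cardinalities cannot in general be replaced by `[0,1]ⁿ`: a one-dimensional
counterexample with `A = {0,…,a}`, `B = {0,…,b}`. -/
theorem cube_cannot_be_replaced_by_unit (a b : ℕ) (ha : 0 < a) (hab : a ≤ b) :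
    ∃ p₀ : ℝ, 1 < p₀ ∧ ∀ p : ℝ, 1 < p → p < p₀ →
      (latG1 (pSum p (((↑) : ℤ → ℝ) '' Set.Icc (0 : ℤ) (a : ℤ))
            (((↑) : ℤ → ℝ) '' Set.Icc (0 : ℤ) (b : ℤ)) + Set.Icc (0 : ℝ) 1) : ℝ) <
          (((((↑) : ℤ → ℝ) '' Set.Icc (0 : ℤ) (a : ℤ)).ncard : ℝ) ^ p
            + ((((↑) : ℤ → ℝ) '' Set.Icc (0 : ℤ) (b : ℤ)).ncard : ℝ) ^ p) ^ (1 / p) ∧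
        (((((↑) : ℤ → ℝ) '' Set.Icc (0 : ℤ) (a : ℤ)).ncard : ℝ) ^ p
            + ((((↑) : ℤ → ℝ) '' Set.Icc (0 : ℤ) (b : ℤ)).ncard : ℝ) ^ p) ^ (1 / p) =
          (((a : ℝ) + 1) ^ p + ((b : ℝ) + 1) ^ p) ^ (1 / p) := by
  have hA := ncard_cast_Icc a
  have hB := ncard_cast_Icc b
  have ha1 : (1 : ℝ) ≤ (a : ℝ) := by exact_mod_cast ha
  have hab' : (a : ℝ) ≤ (b : ℝ) := by exact_mod_cast hab
  -- continuity of the right-hand side at p = 1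
  have hc : ContinuousAt (fun p : ℝ => (((a : ℝ) + 1) ^ p + ((b : ℝ) + 1) ^ p) ^ (1 / p)) 1 := by
    have h1 : ContinuousAt (fun p : ℝ => ((a : ℝ) + 1) ^ p) 1 :=
      Real.continuousAt_const_rpow (by positivity)
    have h2 : ContinuousAt (fun p : ℝ => ((b : ℝ) + 1) ^ p) 1 :=
      Real.continuousAt_const_rpow (by positivity)
    exact (h1.add h2).rpow (continuousAt_const.div continuousAt_id one_ne_zero)
      (Or.inl (by show ((a:ℝ)+1)^(1:ℝ) + ((b:ℝ)+1)^(1:ℝ) ≠ 0; positivity))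
  have hval : (fun p : ℝ => (((a : ℝ) + 1) ^ p + ((b : ℝ) + 1) ^ p) ^ (1 / p)) 1
      = (a : ℝ) + b + 2 := by
    simp [Real.rpow_one]
    ring
  have hmem : (fun p : ℝ => (((a : ℝ) + 1) ^ p + ((b : ℝ) + 1) ^ p) ^ (1 / p)) ⁻¹'
      Set.Ioi ((a : ℝ) + b + 1) ∈ nhds (1 : ℝ) := by
    apply hc
    rw [hval]
    exact Ioi_mem_nhds (by linarith)
  obtain ⟨δ, hδ, hball⟩ := Metric.mem_nhds_iff.mp hmem
  refine ⟨1 + δ, by linarith, fun p hp1 hp2 => ?_⟩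
  have hRHS : (a : ℝ) + b + 1 < (((a : ℝ) + 1) ^ p + ((b : ℝ) + 1) ^ p) ^ (1 / p) := by
    have : p ∈ Metric.ball (1 : ℝ) δ := by
      rw [Metric.mem_ball, Real.dist_eq, abs_of_nonneg (by linarith)]
      linarith
    exact hball this
  rw [hA, hB]
  refine ⟨lt_of_le_of_lt ?_ hRHS, rfl⟩
  -- counting bound
  have hp0 : (0 : ℝ) < p := by linarith
  have hs0 : 0 < 1 - 1 / p := by
    have : 1 / p < 1 := by rw [div_lt_one hp0]; exact hp1
    linarith
  have hs1 : 1 - 1 / p < 1 := by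
    have : 0 < 1 / p := by positivity
    linarith
  have key : ∀ t : ℝ, t ∈ Set.Icc (0 : ℝ) 1 → t ^ (1 - 1/p) ≤ (1 - 1/p) * t + (1 - (1 - 1/p)) := by
    intro t ht
    have := Real.geom_mean_le_arith_mean2_weighted hs0.le (by linarith : (0:ℝ) ≤ 1 - (1 - 1/p))
      ht.1 zero_le_one (by ring)
    simpa using this
  have hsub : (pSum p (((↑) : ℤ → ℝ) '' Set.Icc (0 : ℤ) (a : ℤ))
        (((↑) : ℤ → ℝ) '' Set.Icc (0 : ℤ) (b : ℤ)) + Set.Icc (0 : ℝ) 1)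
        ∩ Set.range ((↑) : ℤ → ℝ)
      ⊆ ((↑) : ℤ → ℝ) '' Set.Icc (0 : ℤ) ((a : ℤ) + (b : ℤ)) := by
    rintro w ⟨hw, k, rfl⟩
    refine ⟨k, ?_, rfl⟩
    obtain ⟨u, hu, t, ht, huw⟩ := Set.mem_add.mp hw
    rw [pSum, if_neg (ne_of_gt hp1)] at hu
    obtain ⟨x, hx, y, hy, μ, hμ, rfl⟩ := hu
    obtain ⟨i, hi, rfl⟩ := hx
    obtain ⟨j, hj, rfl⟩ := hy
    simp only [Set.mem_Icc] at hi hj hμ ht ⊢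
    have hi0 : (0 : ℝ) ≤ (i : ℝ) := by exact_mod_cast hi.1
    have hia : (i : ℝ) ≤ (a : ℝ) := by exact_mod_cast hi.2
    have hj0 : (0 : ℝ) ≤ (j : ℝ) := by exact_mod_cast hj.1
    have hjb : (j : ℝ) ≤ (b : ℝ) := by exact_mod_cast hj.2
    have hc1 : (1 - μ) ^ (1 - 1/p) ≤ (1 - 1/p) * (1 - μ) + (1 - (1 - 1/p)) := key _ ⟨by linarith [hμ.2], by linarith [hμ.1]⟩
    have hc2 : μ ^ (1 - 1/p) ≤ (1 - 1/p) * μ + (1 - (1 - 1/p)) := key _ hμ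
    have hc1n : (0 : ℝ) ≤ (1 - μ) ^ (1 - 1/p) := Real.rpow_nonneg (by linarith [hμ.2]) _
    have hc2n : (0 : ℝ) ≤ μ ^ (1 - 1/p) := Real.rpow_nonneg hμ.1 _
    have hu1 : (1 - μ) ^ (1 - 1/p) * (i : ℝ) ≤ ((1 - 1/p) * (1 - μ) + (1 - (1 - 1/p))) * (a : ℝ) := by
      calc (1 - μ) ^ (1 - 1/p) * (i : ℝ) ≤ (1 - μ) ^ (1 - 1/p) * (a : ℝ) :=
            mul_le_mul_of_nonneg_left hia hc1n
        _ ≤ ((1 - 1/p) * (1 - μ) + (1 - (1 - 1/p))) * (a : ℝ) :=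
            mul_le_mul_of_nonneg_right hc1 (by linarith)
    have hu2 : μ ^ (1 - 1/p) * (j : ℝ) ≤ ((1 - 1/p) * μ + (1 - (1 - 1/p))) * (b : ℝ) := by
      calc μ ^ (1 - 1/p) * (j : ℝ) ≤ μ ^ (1 - 1/p) * (b : ℝ) := mul_le_mul_of_nonneg_left hjb hc2n
        _ ≤ ((1 - 1/p) * μ + (1 - (1 - 1/p))) * (b : ℝ) := mul_le_mul_of_nonneg_right hc2 (by linarith)
    have hprod : 0 ≤ (1 - 1/p) * (1 - μ) * ((b : ℝ) - (a : ℝ)) :=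
      mul_nonneg (mul_nonneg hs0.le (by linarith [hμ.2])) (by linarith)
    have hub : (k : ℝ) < (a : ℝ) + (b : ℝ) + 1 := by
      have hsa : 0 < (1 - 1/p) * (a : ℝ) := mul_pos hs0 (by linarith)
      rw [← huw]
      simp only [smul_eq_mul]
      nlinarith [hu1, hu2, hprod, ht.2]
    have hlb : (0 : ℝ) ≤ (k : ℝ) := by
      rw [← huw]
      simp only [smul_eq_mul]
      have := mul_nonneg hc1n hi0
      have := mul_nonneg hc2n hj0
      linarith [ht.1]
    constructor
    · exact_mod_cast hlb
    · have : (k : ℝ) < ((a : ℤ) + (b : ℤ) + 1 : ℤ) := by push_cast; linarith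
      have h2 : k < (a : ℤ) + (b : ℤ) + 1 := by exact_mod_cast this
      omega
  have hcount : latG1 (pSum p (((↑) : ℤ → ℝ) '' Set.Icc (0 : ℤ) (a : ℤ))
      (((↑) : ℤ → ℝ) '' Set.Icc (0 : ℤ) (b : ℤ)) + Set.Icc (0 : ℝ) 1) ≤ a + b + 1 := by
    rw [latG1]
    calc _ ≤ (((↑) : ℤ → ℝ) '' Set.Icc (0 : ℤ) ((a : ℤ) + (b : ℤ))).ncard :=
          Set.ncard_le_ncard hsub ((Set.finite_Icc _ _).image _)
      _ = a + b + 1 := by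
          rw [Set.ncard_image_of_injective _ Int.cast_injective, ← Finset.coe_Icc,
            Set.ncard_coe_finset, Int.card_Icc]
          omega
  calc (latG1 _ : ℝ) ≤ ((a + b + 1 : ℕ) : ℝ) := by exact_mod_cast hcount
    _ = (a : ℝ) + b + 1 := by push_cast; ring
    _ ≤ _ := le_refl _
end

section
/- Let n ≥ 1, λ ∈ (0,1) and let K, L ⊆ ℝⁿ be nonempty bounded sets. Then G((1-λ)K + λL + (-1,1)ⁿ)^{1/n} ≥ (1-λ)·G(K)^{1/n} + λ·G(L)^{1/n}, where + denotes Minkowski addition. -/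
open scoped Pointwise

/-- The set of integer points of `ℝⁿ`. -/
def intPts (n : ℕ) : Set (Fin n → ℝ) := {x | ∀ i, ∃ m : ℤ, x i = (m : ℝ)}

/-- The lattice point enumerator `G(M) = |M ∩ ℤⁿ|`. -/
noncomputable def latG {n : ℕ} (M : Set (Fin n → ℝ)) : ℕ := (M ∩ intPts n).ncard

/-- The open cube `(a, b)ⁿ` in `ℝⁿ`. -/
def cube (n : ℕ) (a b : ℝ) : Set (Fin n → ℝ) := {x | ∀ i, x i ∈ Set.Ioo a b}

/-!
The inequality is reduced to the Brunn–Minkowski inequality for finite unions of pairwise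
disjoint boxes. Choose finite sets `A ⊆ K`, `B ⊆ L` of points at pairwise sup-distance `≥ 1` with
`|A| ≥ G(K)`, `|B| ≥ G(L)` (the lattice points, or a single point if there are none) and replace
every point by a cube of side `1 - λ`, resp. `λ`. The two unions have volumes `(1 - λ)ⁿ |A|` and
`λⁿ |B|`, and their Minkowski sum is covered by the unit cubes `z + (0, 1]ⁿ` with `z` an integer
point of `(1 - λ)K + λL + (-1, 1)ⁿ`, so its volume is at most `G((1 - λ)K + λL + (-1, 1)ⁿ)`.

Brunn–Minkowski for unions of boxes is the Hadwiger–Ohmann induction on the total number of boxes.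
For two single boxes it is the AM–GM inequality. Otherwise two disjoint boxes of one family are
separated by a coordinate hyperplane; cut that family there and the other family by a parallel
hyperplane in the same volume ratio. The two halves of the Minkowski sum lie on opposite sides of
the sum of the two hyperplanes, and the induction hypotheses for the two halves add up.
-/

open MeasureTheory Set Bornology BoxIntegral Fintype
open scoped ENNReal

section GeomMean

variable {ι : Type*} [Fintype ι] [Nonempty ι]

theorem prod_rpow_inv_card_le_mul_sum_div {z w : ι → ℝ} (hz : ∀ i, 0 ≤ z i) (hw : ∀ i, 0 < w i) :
    (∏ i, z i) ^ (card ι : ℝ)⁻¹ ≤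
      (∏ i, w i) ^ (card ι : ℝ)⁻¹ * ((card ι : ℝ)⁻¹ * ∑ i, z i / w i) := by
  have hW : 0 < (∏ i, w i) ^ (card ι : ℝ)⁻¹ :=
    Real.rpow_pos_of_pos (Finset.prod_pos fun i _ => hw i) _
  have amgm := Real.geom_mean_le_arith_mean_weighted Finset.univ (fun _ => (card ι : ℝ)⁻¹)
    (fun i => z i / w i) (fun _ _ => by positivity) (by simp [Finset.card_univ])
    (fun i _ => div_nonneg (hz i) (hw i).le)
  rw [Real.finsetProd_rpow _ _ (fun i _ => div_nonneg (hz i) (hw i).le), Finset.prod_div_distrib,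
    Real.div_rpow (Finset.prod_nonneg fun i _ => hz i) (Finset.prod_nonneg fun i _ => (hw i).le),
    div_le_iff₀ hW, ← Finset.mul_sum] at amgm
  linarith

theorem prod_rpow_inv_card_add_le {x y : ι → ℝ} (hx : ∀ i, 0 < x i) (hy : ∀ i, 0 < y i) :
    (∏ i, x i) ^ (card ι : ℝ)⁻¹ + (∏ i, y i) ^ (card ι : ℝ)⁻¹ ≤
      (∏ i, (x i + y i)) ^ (card ι : ℝ)⁻¹ := by
  have hxy : ∀ i, 0 < x i + y i := fun i => add_pos (hx i) (hy i)
  have hsum : (card ι : ℝ)⁻¹ * ∑ i, x i / (x i + y i) +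
      (card ι : ℝ)⁻¹ * ∑ i, y i / (x i + y i) = 1 := by
    rw [← mul_add, ← Finset.sum_add_distrib]
    simp_rw [← add_div, div_self (hxy _).ne']
    simp [Finset.card_univ]
  calc _ ≤ (∏ i, (x i + y i)) ^ (card ι : ℝ)⁻¹ *
        ((card ι : ℝ)⁻¹ * ∑ i, x i / (x i + y i) + (card ι : ℝ)⁻¹ * ∑ i, y i / (x i + y i)) := by
        rw [mul_add]
        exact add_le_add (prod_rpow_inv_card_le_mul_sum_div (fun i => (hx i).le) hxy)
          (prod_rpow_inv_card_le_mul_sum_div (fun i => (hy i).le) hxy)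
    _ = _ := by rw [hsum, mul_one]

end GeomMean

theorem Set.Ioc_add_subset_Ioc_add_Ioc {a b c d : ℝ} (hab : a < b) (hcd : c < d) :
    Ioc (a + c) (b + d) ⊆ Ioc a b + Ioc c d := by
  rintro x ⟨hx₁, hx₂⟩
  -- split `x - a - c` between the two intervals in proportion to their lengths
  set r := (b - a) / ((b - a) + (d - c))
  have hr₀ : 0 < r := div_pos (by linarith) (by linarith)
  have hr₁ : r < 1 := (div_lt_one (by linarith)).2 (by linarith)
  have hr : r * ((b - a) + (d - c)) = b - a := div_mul_cancel₀ _ (by linarith)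
  refine ⟨a + r * (x - a - c), ⟨?_, ?_⟩, x - (a + r * (x - a - c)), ⟨?_, ?_⟩, by ring⟩
  all_goals nlinarith

theorem mul_add_rpow_inv_pow_le {n : ℕ} (hn : n ≠ 0) {φ a b r : ℝ} (hφ : 0 ≤ φ) (ha : 0 ≤ a)
    (hb : 0 ≤ b) (h : (φ * a) ^ (n : ℝ)⁻¹ + (φ * b) ^ (n : ℝ)⁻¹ ≤ r ^ (n : ℝ)⁻¹) (hr : 0 ≤ r) :
    φ * (a ^ (n : ℝ)⁻¹ + b ^ (n : ℝ)⁻¹) ^ n ≤ r := by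
  rw [Real.mul_rpow hφ ha, Real.mul_rpow hφ hb, ← mul_add] at h
  have := pow_le_pow_left₀ (by positivity) h n
  rwa [mul_pow, Real.rpow_inv_natCast_pow hφ hn, Real.rpow_inv_natCast_pow hr hn] at this

section HalfSpaces

theorem exists_measureReal_inter_le_eq {α : Type*} [MeasurableSpace α] (μ : Measure α)
    {X : Set α} {g : α → ℝ} (hg : IsBounded (g '' X))
    (hcont : Continuous fun c => μ.real (X ∩ {y | g y ≤ c})) {θ : ℝ} (hθ : θ ∈ Icc 0 1) :
    ∃ c, μ.real (X ∩ {y | g y ≤ c}) = θ * μ.real X := by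
  obtain ⟨m, hm⟩ := hg.bddBelow
  obtain ⟨M, hM⟩ := hg.bddAbove
  have hbot : X ∩ {y | g y ≤ m - 1} = ∅ :=
    eq_empty_of_forall_notMem fun y hy => by linarith [hm ⟨y, hy.1, rfl⟩, hy.2.out]
  have htop : X ∩ {y | g y ≤ M} = X := inter_eq_left.2 fun y hy => hM ⟨y, hy, rfl⟩
  have hmem : θ * μ.real X ∈ Icc (μ.real (X ∩ {y | g y ≤ m - 1})) (μ.real (X ∩ {y | g y ≤ M})) := by
    rw [hbot, htop, measureReal_empty]
    exact ⟨mul_nonneg hθ.1 measureReal_nonneg, mul_le_of_le_one_left measureReal_nonneg hθ.2⟩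
  exact intermediate_value_univ (m - 1) M hcont hmem

theorem measureReal_inter_le_add_inter_lt {α : Type*} [MeasurableSpace α] {μ : Measure α}
    {X : Set α} (hX : μ X ≠ ∞) {g : α → ℝ} (hg : Measurable g) (c : ℝ) :
    μ.real (X ∩ {y | g y ≤ c}) + μ.real (X ∩ {y | c < g y}) = μ.real X := by
  simpa only [sdiff_eq, compl_ofPred, not_le] using
    measureReal_inter_add_sdiff (μ := μ) (s := X)
      (measurableSet_le hg (measurable_const (a := c))) hX

variable {ι : Type*}

theorem measure_inter_add_inter_le (μ : Measure (ι → ℝ)) (X Y : Set (ι → ℝ)) (i : ι) (c c' : ℝ) :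
    μ (X ∩ {y | y i ≤ c} + Y ∩ {y | y i ≤ c'}) + μ (X ∩ {y | c < y i} + Y ∩ {y | c' < y i}) ≤
      μ (X + Y) := by
  have hH : MeasurableSet {y : ι → ℝ | y i ≤ c + c'} :=
    measurableSet_le (measurable_pi_apply i) measurable_const
  rw [← measure_inter_add_sdiff (X + Y) hH]
  gcongr
  · rintro _ ⟨x, ⟨hx, hxc⟩, y, ⟨hy, hyc⟩, rfl⟩
    exact ⟨add_mem_add hx hy, show x i + y i ≤ c + c' from add_le_add hxc hyc⟩
  · rintro _ ⟨x, ⟨hx, hxc⟩, y, ⟨hy, hyc⟩, rfl⟩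
    exact ⟨add_mem_add hx hy, show ¬x i + y i ≤ c + c' from not_le.2 (add_lt_add hxc hyc)⟩

end HalfSpaces

section BrunnMinkowski

variable {ι : Type*} [Fintype ι]

def SatisfiesBrunnMinkowski (X Y : Set (ι → ℝ)) : Prop :=
  volume.real X ^ (card ι : ℝ)⁻¹ + volume.real Y ^ (card ι : ℝ)⁻¹ ≤
    volume.real (X + Y) ^ (card ι : ℝ)⁻¹

theorem SatisfiesBrunnMinkowski.symm {X Y : Set (ι → ℝ)} (h : SatisfiesBrunnMinkowski X Y) :
    SatisfiesBrunnMinkowski Y X := by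
  rwa [SatisfiesBrunnMinkowski, add_comm Y, add_comm (volume.real Y ^ _)]

theorem satisfiesBrunnMinkowski_of_split [Nonempty ι] {X Y : Set (ι → ℝ)} (hX : volume X ≠ ∞)
    (hY : volume Y ≠ ∞) (hXY : volume (X + Y) ≠ ∞) (i : ι) {c c' θ : ℝ} (hθ : θ ∈ Icc 0 1)
    (hXc : volume.real (X ∩ {y | y i ≤ c}) = θ * volume.real X)
    (hYc : volume.real (Y ∩ {y | y i ≤ c'}) = θ * volume.real Y)
    (h₁ : SatisfiesBrunnMinkowski (X ∩ {y | y i ≤ c}) (Y ∩ {y | y i ≤ c'}))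
    (h₂ : SatisfiesBrunnMinkowski (X ∩ {y | c < y i}) (Y ∩ {y | c' < y i})) :
    SatisfiesBrunnMinkowski X Y := by
  have hn : card ι ≠ 0 := card_ne_zero
  have hXc' : volume.real (X ∩ {y | c < y i}) = (1 - θ) * volume.real X := by
    linarith [measureReal_inter_le_add_inter_lt hX (measurable_pi_apply i) c]
  have hYc' : volume.real (Y ∩ {y | c' < y i}) = (1 - θ) * volume.real Y := by
    linarith [measureReal_inter_le_add_inter_lt hY (measurable_pi_apply i) c']
  rw [SatisfiesBrunnMinkowski, hXc, hYc] at h₁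
  rw [SatisfiesBrunnMinkowski, hXc', hYc'] at h₂
  have h₁' := mul_add_rpow_inv_pow_le hn hθ.1 measureReal_nonneg measureReal_nonneg h₁
    measureReal_nonneg
  have h₂' := mul_add_rpow_inv_pow_le hn (sub_nonneg.2 hθ.2) measureReal_nonneg measureReal_nonneg
    h₂ measureReal_nonneg
  have hsuper := measure_inter_add_inter_le volume X Y i c c'
  have hfin := ENNReal.add_ne_top.1 (ne_top_of_le_ne_top hXY hsuper)
  have hsuper' := ENNReal.toReal_mono hXY hsuper
  rw [ENNReal.toReal_add hfin.1 hfin.2] at hsuper'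
  simp only [← measureReal_def] at hsuper'
  rw [SatisfiesBrunnMinkowski, Real.le_rpow_inv_iff_of_pos (by positivity) measureReal_nonneg
    (by positivity), Real.rpow_natCast]
  linarith

end BrunnMinkowski

namespace BoxIntegral.Box

variable {ι : Type*}

theorem exists_upper_le_lower_of_disjoint {I J : Box ι} (h : Disjoint (I : Set (ι → ℝ)) J) :
    ∃ i, I.upper i ≤ J.lower i ∨ J.upper i ≤ I.lower i := by
  by_contra! H
  exact Set.disjoint_left.1 h
    (show I.upper ⊓ J.upper ∈ (I : Set (ι → ℝ)) from
      fun i => ⟨lt_min (I.lower_lt_upper i) (H i).2, min_le_left _ _⟩)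
    (fun i => ⟨lt_min (H i).1 (J.lower_lt_upper i), min_le_right _ _⟩)

instance : Add (Box ι) :=
  ⟨fun I J => ⟨I.lower + J.lower, I.upper + J.upper,
    fun i => add_lt_add (I.lower_lt_upper i) (J.lower_lt_upper i)⟩⟩

theorem coe_add_subset (I J : Box ι) : ((I + J : Box ι) : Set (ι → ℝ)) ⊆ I + J := by
  intro x hx
  choose a ha b hb hab using fun i =>
    Set.Ioc_add_subset_Ioc_add_Ioc (I.lower_lt_upper i) (J.lower_lt_upper i) (hx i)
  exact ⟨a, ha, b, hb, funext hab⟩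

theorem satisfiesBrunnMinkowski [Fintype ι] [Nonempty ι] (I J : Box ι) :
    SatisfiesBrunnMinkowski (I : Set (ι → ℝ)) (J : Set (ι → ℝ)) := by
  have hIJ := measureReal_mono (μ := volume) (coe_add_subset I J)
    (I.isBounded.add J.isBounded).measure_lt_top.ne
  have hsides : ∀ i, (I + J).upper i - (I + J).lower i =
      (I.upper i - I.lower i) + (J.upper i - J.lower i) := fun i => by
    change I.upper i + J.upper i - (I.lower i + J.lower i) = _
    ring
  have hI : ∀ i, 0 < I.upper i - I.lower i := fun i => sub_pos.2 (I.lower_lt_upper i)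
  have hJ : ∀ i, 0 < J.upper i - J.lower i := fun i => sub_pos.2 (J.lower_lt_upper i)
  simp only [SatisfiesBrunnMinkowski, measureReal_def, volume_apply', hsides] at hIJ ⊢
  exact (prod_rpow_inv_card_add_le hI hJ).trans (Real.rpow_le_rpow
    (Finset.prod_nonneg fun i _ => (add_pos (hI i) (hJ i)).le) hIJ (by positivity))

def unionBoxes (s : Finset (Box ι)) : Set (ι → ℝ) := ⋃ J ∈ s, (J : Set (ι → ℝ))

@[simp]
theorem unionBoxes_empty : unionBoxes (∅ : Finset (Box ι)) = ∅ := by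
  simp [unionBoxes]

-- `⊥ : WithBot (Box ι)` stands for the empty box; taking the preimage under `(↑)` drops it.
open Classical in
noncomputable def imageBoxes (f : Box ι → WithBot (Box ι)) (s : Finset (Box ι)) : Finset (Box ι) :=
  (s.image f).preimage (↑) WithBot.coe_injective.injOn

variable {f : Box ι → WithBot (Box ι)} {s : Finset (Box ι)}

theorem mem_imageBoxes {K : Box ι} : K ∈ imageBoxes f s ↔ ∃ J ∈ s, f J = K := by
  simp [imageBoxes]

theorem unionBoxes_imageBoxes : unionBoxes (imageBoxes f s) = ⋃ J ∈ s, (f J : Set (ι → ℝ)) := by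
  ext x
  simp only [unionBoxes, mem_iUnion, mem_imageBoxes, exists_prop]
  constructor
  · rintro ⟨K, ⟨J, hJ, hJK⟩, hx⟩
    exact ⟨J, hJ, by rwa [hJK]⟩
  · rintro ⟨J, hJ, hx⟩
    cases hf : f J with
    | bot => simp [hf] at hx
    | coe K => exact ⟨K, ⟨J, hJ, hf⟩, by rwa [hf] at hx⟩

theorem pairwiseDisjoint_imageBoxes (hf : ∀ J, f J ≤ J)
    (hs : (s : Set (Box ι)).PairwiseDisjoint ((↑) : Box ι → Set (ι → ℝ))) :
    (imageBoxes f s : Set (Box ι)).PairwiseDisjoint ((↑) : Box ι → Set (ι → ℝ)) := by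
  rintro K₁ hK₁ K₂ hK₂ hne
  obtain ⟨J₁, hJ₁, h₁⟩ := mem_imageBoxes.1 hK₁
  obtain ⟨J₂, hJ₂, h₂⟩ := mem_imageBoxes.1 hK₂
  have hsub : ∀ {J K}, f J = K → (K : Set (ι → ℝ)) ⊆ J := fun hJK =>
    withBotCoe_subset_iff.2 (hJK ▸ hf _)
  exact (hs hJ₁ hJ₂ fun h => hne (WithBot.coe_injective (by rw [← h₁, ← h₂, h]))).mono
    (hsub h₁) (hsub h₂)

theorem card_imageBoxes_le_card_erase_bot [DecidableEq (WithBot (Box ι))] :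
    (imageBoxes f s).card ≤ ((s.image f).erase ⊥).card := by
  refine Finset.card_le_card_of_injOn (↑) (fun K hK => ?_) WithBot.coe_injective.injOn
  obtain ⟨J, hJ, hJK⟩ := mem_imageBoxes.1 hK
  exact Finset.mem_erase.2 ⟨WithBot.coe_ne_bot, Finset.mem_image.2 ⟨J, hJ, hJK⟩⟩

theorem card_imageBoxes_le : (imageBoxes f s).card ≤ s.card := by
  classical
  exact card_imageBoxes_le_card_erase_bot.trans
    ((Finset.card_erase_le).trans Finset.card_image_le)

theorem card_imageBoxes_lt {J : Box ι} (hJ : J ∈ s) (h : f J = ⊥) :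
    (imageBoxes f s).card < s.card := by
  classical
  refine card_imageBoxes_le_card_erase_bot.trans_lt ?_
  rw [Finset.card_erase_of_mem (Finset.mem_image.2 ⟨J, hJ, h⟩)]
  have := Finset.card_image_le (s := s) (f := f)
  have := Finset.card_pos.2 ⟨J, hJ⟩
  omega

theorem unionBoxes_splitLower (s : Finset (Box ι)) (i : ι) (c : ℝ) :
    unionBoxes (imageBoxes (splitLower · i c) s) = unionBoxes s ∩ {y | y i ≤ c} := by
  rw [unionBoxes_imageBoxes]
  simp only [coe_splitLower, unionBoxes, iUnion₂_inter]

theorem unionBoxes_splitUpper (s : Finset (Box ι)) (i : ι) (c : ℝ) :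
    unionBoxes (imageBoxes (splitUpper · i c) s) = unionBoxes s ∩ {y | c < y i} := by
  rw [unionBoxes_imageBoxes]
  simp only [coe_splitUpper, unionBoxes, iUnion₂_inter]

theorem exists_split_of_one_lt_card (hs : 1 < s.card)
    (hsd : (s : Set (Box ι)).PairwiseDisjoint ((↑) : Box ι → Set (ι → ℝ))) :
    ∃ i c, (imageBoxes (splitLower · i c) s).Nonempty ∧
      (imageBoxes (splitUpper · i c) s).Nonempty ∧
      (imageBoxes (splitLower · i c) s).card < s.card ∧
      (imageBoxes (splitUpper · i c) s).card < s.card := by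
  obtain ⟨J₁, hJ₁, J₂, hJ₂, i, hsep⟩ : ∃ J₁ ∈ s, ∃ J₂ ∈ s, ∃ i, J₁.upper i ≤ J₂.lower i := by
    obtain ⟨J₁, hJ₁, J₂, hJ₂, hne⟩ := Finset.one_lt_card.1 hs
    obtain ⟨i, h | h⟩ := exists_upper_le_lower_of_disjoint (hsd hJ₁ hJ₂ hne)
    exacts [⟨J₁, hJ₁, J₂, hJ₂, i, h⟩, ⟨J₂, hJ₂, J₁, hJ₁, i, h⟩]
  exact ⟨i, J₁.upper i, ⟨J₁, mem_imageBoxes.2 ⟨J₁, hJ₁, splitLower_eq_self.2 le_rfl⟩⟩,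
    ⟨J₂, mem_imageBoxes.2 ⟨J₂, hJ₂, splitUpper_eq_self.2 hsep⟩⟩,
    card_imageBoxes_lt hJ₂ (splitLower_eq_bot.2 hsep),
    card_imageBoxes_lt hJ₁ (splitUpper_eq_bot.2 le_rfl)⟩

section Measure

variable [Fintype ι] {s : Finset (Box ι)}

theorem isBounded_unionBoxes (s : Finset (Box ι)) : IsBounded (unionBoxes s) :=
  (isBounded_biUnion_finset s).2 fun J _ => J.isBounded

theorem volume_unionBoxes_ne_top (s : Finset (Box ι)) : volume (unionBoxes s) ≠ ∞ :=
  (isBounded_unionBoxes s).measure_lt_top.ne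

theorem volume_real_pos (J : Box ι) : 0 < volume.real (J : Set (ι → ℝ)) := by
  rw [measureReal_def, volume_apply']
  exact Finset.prod_pos fun i _ => sub_pos.2 (J.lower_lt_upper i)

theorem volume_real_unionBoxes_pos_iff : 0 < volume.real (unionBoxes s) ↔ s.Nonempty := by
  refine ⟨fun h => Finset.nonempty_iff_ne_empty.2 ?_, fun ⟨J, hJ⟩ => ?_⟩
  · rintro rfl
    simp at h
  · exact (volume_real_pos J).trans_le <|
      measureReal_mono (subset_biUnion_of_mem hJ) (volume_unionBoxes_ne_top s)

theorem continuous_volume_real_inter_le (J : Box ι) (i : ι) :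
    Continuous fun c => volume.real ((J : Set (ι → ℝ)) ∩ {y | y i ≤ c}) := by
  classical
  simp_rw [← coe_splitLower, splitLower, coe_mk', measureReal_def, Real.volume_pi_Ioc,
    ENNReal.toReal_prod, ENNReal.toReal_ofReal']
  fun_prop

theorem continuous_volume_real_unionBoxes_inter_le
    (hs : (s : Set (Box ι)).PairwiseDisjoint ((↑) : Box ι → Set (ι → ℝ))) (i : ι) :
    Continuous fun c => volume.real (unionBoxes s ∩ {y | y i ≤ c}) := by
  have hsum : ∀ c, volume.real (unionBoxes s ∩ {y | y i ≤ c}) =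
      ∑ J ∈ s, volume.real ((J : Set (ι → ℝ)) ∩ {y | y i ≤ c}) := fun c => by
    rw [unionBoxes, iUnion₂_inter]
    exact measureReal_biUnion_finset (hs.mono_on fun J _ => inter_subset_left)
      (fun J _ => J.measurableSet_coe.inter (measurableSet_le (measurable_pi_apply i)
        measurable_const))
      fun J _ => (J.isBounded.subset inter_subset_left).measure_lt_top.ne
  simp_rw [hsum]
  exact continuous_finsetSum s fun J _ => continuous_volume_real_inter_le J i

theorem volume_real_unionBoxes {s : Finset (Box ι)}
    (hs : (s : Set (Box ι)).PairwiseDisjoint ((↑) : Box ι → Set (ι → ℝ))) :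
    volume.real (unionBoxes s) = ∑ J ∈ s, volume.real (J : Set (ι → ℝ)) :=
  measureReal_biUnion_finset hs (fun J _ => J.measurableSet_coe)
    fun J _ => J.isBounded.measure_lt_top.ne

theorem exists_split_of_ratio {t : Finset (Box ι)} (ht : t.Nonempty)
    (htd : (t : Set (Box ι)).PairwiseDisjoint ((↑) : Box ι → Set (ι → ℝ))) (i : ι) {θ : ℝ}
    (hθ : θ ∈ Ioo 0 1) :
    ∃ c, volume.real (unionBoxes t ∩ {y | y i ≤ c}) = θ * volume.real (unionBoxes t) ∧
      (imageBoxes (splitLower · i c) t).Nonempty ∧ (imageBoxes (splitUpper · i c) t).Nonempty := by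
  obtain ⟨c, hc⟩ := exists_measureReal_inter_le_eq volume (g := fun y : ι → ℝ => y i)
    ((isBounded_unionBoxes t).image_eval i) (continuous_volume_real_unionBoxes_inter_le htd i)
    (Ioo_subset_Icc_self hθ)
  have hY := measureReal_inter_le_add_inter_lt (volume_unionBoxes_ne_top t)
    (measurable_pi_apply i) c
  have hYpos := volume_real_unionBoxes_pos_iff.2 ht
  refine ⟨c, hc, volume_real_unionBoxes_pos_iff.1 ?_, volume_real_unionBoxes_pos_iff.1 ?_⟩
  · rw [unionBoxes_splitLower, hc]
    exact mul_pos hθ.1 hYpos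
  · rw [unionBoxes_splitUpper]
    nlinarith [hθ.2]

variable [Nonempty ι]

theorem satisfiesBrunnMinkowski_unionBoxes_of_one_lt_card {s t : Finset (Box ι)}
    (IH : ∀ s' t' : Finset (Box ι), s'.card + t'.card < s.card + t.card → s'.Nonempty →
      t'.Nonempty → (s' : Set (Box ι)).PairwiseDisjoint ((↑) : Box ι → Set (ι → ℝ)) →
      (t' : Set (Box ι)).PairwiseDisjoint ((↑) : Box ι → Set (ι → ℝ)) →
      SatisfiesBrunnMinkowski (unionBoxes s') (unionBoxes t'))
    (hs : 1 < s.card) (ht : t.Nonempty)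
    (hsd : (s : Set (Box ι)).PairwiseDisjoint ((↑) : Box ι → Set (ι → ℝ)))
    (htd : (t : Set (Box ι)).PairwiseDisjoint ((↑) : Box ι → Set (ι → ℝ))) :
    SatisfiesBrunnMinkowski (unionBoxes s) (unionBoxes t) := by
  obtain ⟨i, c, hsL, hsR, hcardL, hcardR⟩ := exists_split_of_one_lt_card hs hsd
  have hXL := volume_real_unionBoxes_pos_iff.2 hsL
  have hXR := volume_real_unionBoxes_pos_iff.2 hsR
  rw [unionBoxes_splitLower] at hXL
  rw [unionBoxes_splitUpper] at hXR
  have hX := measureReal_inter_le_add_inter_lt (volume_unionBoxes_ne_top s)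
    (measurable_pi_apply i) c
  -- cutting `Y` in the same volume ratio as `X` makes the two halves recombine
  set θ := volume.real (unionBoxes s ∩ {y | y i ≤ c}) / volume.real (unionBoxes s)
  have hθ : θ ∈ Ioo 0 1 :=
    ⟨div_pos hXL (by linarith), (div_lt_one (by linarith)).2 (by linarith)⟩
  obtain ⟨c', hc', htL, htR⟩ := exists_split_of_ratio ht htd i hθ
  refine satisfiesBrunnMinkowski_of_split (volume_unionBoxes_ne_top s)
    (volume_unionBoxes_ne_top t)
    ((isBounded_unionBoxes s).add (isBounded_unionBoxes t)).measure_lt_top.ne i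
    (Ioo_subset_Icc_self hθ) (div_mul_cancel₀ _ (by linarith)).symm hc' ?_ ?_
  · rw [← unionBoxes_splitLower, ← unionBoxes_splitLower]
    refine IH _ _ ?_ hsL htL (pairwiseDisjoint_imageBoxes (fun _ => splitLower_le) hsd)
      (pairwiseDisjoint_imageBoxes (fun _ => splitLower_le) htd)
    linarith [card_imageBoxes_le (f := (splitLower · i c')) (s := t)]
  · rw [← unionBoxes_splitUpper, ← unionBoxes_splitUpper]
    refine IH _ _ ?_ hsR htR (pairwiseDisjoint_imageBoxes (fun _ => splitUpper_le) hsd)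
      (pairwiseDisjoint_imageBoxes (fun _ => splitUpper_le) htd)
    linarith [card_imageBoxes_le (f := (splitUpper · i c')) (s := t)]

theorem satisfiesBrunnMinkowski_unionBoxes {s t : Finset (Box ι)} (hs : s.Nonempty)
    (ht : t.Nonempty) (hsd : (s : Set (Box ι)).PairwiseDisjoint ((↑) : Box ι → Set (ι → ℝ)))
    (htd : (t : Set (Box ι)).PairwiseDisjoint ((↑) : Box ι → Set (ι → ℝ))) :
    SatisfiesBrunnMinkowski (unionBoxes s) (unionBoxes t) := by
  induction hN : s.card + t.card using Nat.strong_induction_on generalizing s t with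
  | _ N IH =>
  subst hN
  have IH' := fun s' t' h => IH _ h (s := s') (t := t') (hN := rfl)
  rcases lt_or_ge 1 s.card with hs₂ | hs₁
  · exact satisfiesBrunnMinkowski_unionBoxes_of_one_lt_card IH' hs₂ ht hsd htd
  rcases lt_or_ge 1 t.card with ht₂ | ht₁
  · refine (satisfiesBrunnMinkowski_unionBoxes_of_one_lt_card
      (fun s' t' h hs' ht' hs'd ht'd => (IH' t' s' (by omega) ht' hs' ht'd hs'd).symm)
      ht₂ hs htd hsd).symm
  obtain ⟨I, rfl⟩ := Finset.card_eq_one.1 (le_antisymm hs₁ (Finset.card_pos.2 hs))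
  obtain ⟨J, rfl⟩ := Finset.card_eq_one.1 (le_antisymm ht₁ (Finset.card_pos.2 ht))
  simpa [unionBoxes] using I.satisfiesBrunnMinkowski J

end Measure

end BoxIntegral.Box

section LatticePoints

variable {ι : Type*}

def IsUnitSeparated (A : Set (ι → ℝ)) : Prop :=
  A.Pairwise fun a b => ∃ i, 1 ≤ |a i - b i|

theorem IsUnitSeparated.mono {A B : Set (ι → ℝ)} (hB : IsUnitSeparated B) (h : A ⊆ B) :
    IsUnitSeparated A :=
  Set.Pairwise.mono h hB

namespace BoxIntegral.Box

variable {μ : ℝ} (hμ : 0 < μ)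

def scaledCube (a : ι → ℝ) : Box ι :=
  ⟨μ • a, μ • (a + 1), fun i => by simpa using mul_lt_mul_of_pos_left (lt_add_one (a i)) hμ⟩

theorem mem_scaledCube {a x : ι → ℝ} :
    x ∈ scaledCube hμ a ↔ ∀ i, μ * a i < x i ∧ x i ≤ μ * (a i + 1) := by
  simp [scaledCube, mem_def, mul_add]

theorem volume_real_scaledCube [Fintype ι] (a : ι → ℝ) :
    volume.real (scaledCube hμ a : Set (ι → ℝ)) = μ ^ card ι := by
  simp [measureReal_def, volume_apply', scaledCube, Finset.card_univ]

theorem scaledCube_injective : Function.Injective (scaledCube (ι := ι) hμ) := fun _ _ h =>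
  smul_right_injective _ hμ.ne' (congrArg lower h)

open Classical in
theorem pairwiseDisjoint_image_scaledCube {A : Finset (ι → ℝ)}
    (hA : IsUnitSeparated (A : Set (ι → ℝ))) :
    ((A.image (scaledCube hμ) : Finset (Box ι)) : Set (Box ι)).PairwiseDisjoint
      ((↑) : Box ι → Set (ι → ℝ)) := by
  rw [Finset.coe_image, (scaledCube_injective hμ).injOn.pairwiseDisjoint_image]
  intro a ha b hb hab
  obtain ⟨i, hi⟩ := hA ha hb hab
  refine Set.disjoint_left.2 fun x hxa hxb => ?_
  have ha := ((mem_scaledCube hμ).1 hxa) i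
  have hb := ((mem_scaledCube hμ).1 hxb) i
  cases abs_cases (a i - b i) <;> nlinarith

open Classical in
theorem volume_real_unionBoxes_image_scaledCube [Fintype ι] {A : Finset (ι → ℝ)}
    (hA : IsUnitSeparated (A : Set (ι → ℝ))) :
    volume.real (unionBoxes (A.image (scaledCube hμ))) = A.card * μ ^ card ι := by
  rw [volume_real_unionBoxes (pairwiseDisjoint_image_scaledCube hμ hA),
    Finset.sum_image fun a _ b _ h => scaledCube_injective hμ h]
  simp [volume_real_scaledCube]

theorem mem_scaledCube_ceil_sub_one (x : ι → ℝ) :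
    x ∈ scaledCube one_pos fun i => (⌈x i⌉ : ℝ) - 1 := by
  simp only [mem_scaledCube, one_mul, sub_add_cancel]
  exact fun i => ⟨by linarith [Int.ceil_lt_add_one (x i)], Int.le_ceil (x i)⟩

end BoxIntegral.Box

end LatticePoints

section Discrete

open BoxIntegral.Box

variable {n : ℕ}

theorem finite_inter_intPts {M : Set (Fin n → ℝ)} (hM : IsBounded M) : (M ∩ intPts n).Finite := by
  refine (ZSpan.setFinite_inter (Pi.basisFun ℝ (Fin n)) hM).subset
    (inter_subset_inter_right _ fun x hx => ?_)
  rw [SetLike.mem_coe, Module.Basis.mem_span_iff_repr_mem]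
  intro i
  obtain ⟨m, hm⟩ := hx i
  exact ⟨m, by simp [hm]⟩

theorem isUnitSeparated_intPts : IsUnitSeparated (intPts n) := by
  intro a ha b hb hab
  obtain ⟨i, hi⟩ := Function.ne_iff.1 hab
  obtain ⟨p, hp⟩ := ha i
  obtain ⟨q, hq⟩ := hb i
  have hpq : p - q ≠ 0 := sub_ne_zero.2 fun h => hi (by rw [hp, hq, h])
  exact ⟨i, by rw [hp, hq, ← Int.cast_sub, ← Int.cast_abs]; exact_mod_cast Int.one_le_abs hpq⟩

theorem isBounded_cube (n : ℕ) (a b : ℝ) : IsBounded (cube n a b) := by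
  have : cube n a b = univ.pi fun _ => Ioo a b := by ext; simp [cube]
  rw [this]
  exact IsBounded.pi fun _ => Metric.isBounded_Ioo a b

theorem exists_isUnitSeparated_finset {K : Set (Fin n → ℝ)} (hK : IsBounded K)
    (hne : K.Nonempty) :
    ∃ A : Finset (Fin n → ℝ), A.Nonempty ∧ ↑A ⊆ K ∧ IsUnitSeparated (A : Set (Fin n → ℝ)) ∧
      latG K ≤ A.card := by
  have hfin := finite_inter_intPts hK
  rcases (K ∩ intPts n).eq_empty_or_nonempty with h | h
  · -- `latG K = 0`, and a point of `K` keeps the family of cubes nonempty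
    obtain ⟨x, hx⟩ := hne
    exact ⟨{x}, Finset.singleton_nonempty x, by simpa using hx, by simp [IsUnitSeparated],
      by simp [latG, h]⟩
  · exact ⟨hfin.toFinset, by simpa using h, by simp [inter_subset_left],
      isUnitSeparated_intPts.mono (by simp [inter_subset_right]),
      (Set.ncard_eq_toFinset_card _ hfin).le⟩

open Classical in
theorem unionBoxes_add_subset {μ ν : ℝ} (hμ : 0 < μ) (hν : 0 < ν) (hμν : μ + ν = 1)
    {K L : Set (Fin n → ℝ)} {A B : Finset (Fin n → ℝ)} (hAK : ↑A ⊆ K) (hBL : ↑B ⊆ L)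
    (hfin : ((μ • K + ν • L + cube n (-1) 1) ∩ intPts n).Finite) :
    unionBoxes (A.image (scaledCube hμ)) + unionBoxes (B.image (scaledCube hν)) ⊆
      unionBoxes (hfin.toFinset.image (scaledCube one_pos)) := by
  rintro _ ⟨x, hx, y, hy, rfl⟩
  simp only [unionBoxes, Finset.set_biUnion_finset_image, mem_iUnion₂, mem_coe] at hx hy ⊢
  obtain ⟨a, ha, hxa⟩ := hx
  obtain ⟨b, hb, hyb⟩ := hy
  -- `x + y` lies in the unit cube with corner `⌈x + y⌉ - 1`, which is within `(-1, 1)ⁿ`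
  -- of `μ • a + ν • b`
  refine ⟨_, (Finite.mem_toFinset hfin).2 ⟨?_, fun i => ⟨⌈(x + y) i⌉ - 1, by simp⟩⟩,
    mem_scaledCube_ceil_sub_one (x + y)⟩
  refine ⟨μ • a + ν • b, add_mem_add (smul_mem_smul_set (hAK ha)) (smul_mem_smul_set (hBL hb)),
    _ - (μ • a + ν • b), fun i => ?_, add_sub_cancel _ _⟩
  have hx := ((mem_scaledCube hμ).1 hxa) i
  have hy := ((mem_scaledCube hν).1 hyb) i
  have hz := ((mem_scaledCube one_pos).1 (mem_scaledCube_ceil_sub_one (x + y))) i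
  simp only [Pi.sub_apply, Pi.add_apply, Pi.smul_apply, smul_eq_mul, mem_Ioo]
  simp only [Pi.add_apply, one_mul] at hz
  constructor <;> linarith

open Classical in
theorem mul_card_rpow_add_le_latG (hn : 1 ≤ n) {lam : ℝ} (hlam : lam ∈ Ioo (0 : ℝ) 1)
    {K L : Set (Fin n → ℝ)} {A B : Finset (Fin n → ℝ)} (hA : A.Nonempty) (hB : B.Nonempty)
    (hAK : ↑A ⊆ K) (hBL : ↑B ⊆ L) (hAsep : IsUnitSeparated (A : Set (Fin n → ℝ)))
    (hBsep : IsUnitSeparated (B : Set (Fin n → ℝ)))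
    (hT : IsBounded ((1 - lam) • K + lam • L + cube n (-1) 1)) :
    (1 - lam) * (A.card : ℝ) ^ (1 / (n : ℝ)) + lam * (B.card : ℝ) ^ (1 / (n : ℝ)) ≤
      (latG ((1 - lam) • K + lam • L + cube n (-1) 1) : ℝ) ^ (1 / (n : ℝ)) := by
  have : Nonempty (Fin n) := ⟨⟨0, hn⟩⟩
  have hμ : 0 < 1 - lam := sub_pos.2 hlam.2
  have hfin := finite_inter_intPts hT
  have hBM := satisfiesBrunnMinkowski_unionBoxes (hA.image _) (hB.image _)
    (pairwiseDisjoint_image_scaledCube hμ hAsep) (pairwiseDisjoint_image_scaledCube hlam.1 hBsep)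
  rw [SatisfiesBrunnMinkowski, volume_real_unionBoxes_image_scaledCube hμ hAsep,
    volume_real_unionBoxes_image_scaledCube hlam.1 hBsep, Fintype.card_fin] at hBM
  have hcover := measureReal_mono (μ := volume)
    (unionBoxes_add_subset hμ hlam.1 (sub_add_cancel 1 lam) hAK hBL hfin)
    (volume_unionBoxes_ne_top _)
  rw [volume_real_unionBoxes_image_scaledCube one_pos
    (isUnitSeparated_intPts.mono (by simp [inter_subset_right]))] at hcover
  have hscale : ∀ {μ : ℝ} (m : ℕ), 0 ≤ μ →
      ((m : ℝ) * μ ^ n) ^ (n : ℝ)⁻¹ = μ * (m : ℝ) ^ (n : ℝ)⁻¹ := fun m hμ => by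
    rw [Real.mul_rpow (by positivity) (by positivity), Real.pow_rpow_inv_natCast hμ (by omega),
      mul_comm]
  rw [one_div, latG, Set.ncard_eq_toFinset_card _ hfin]
  calc _ = ((A.card : ℝ) * (1 - lam) ^ n) ^ (n : ℝ)⁻¹ + ((B.card : ℝ) * lam ^ n) ^ (n : ℝ)⁻¹ := by
        rw [hscale _ hμ.le, hscale _ hlam.1.le]
    _ ≤ _ := hBM
    _ ≤ _ := Real.rpow_le_rpow measureReal_nonneg (by simpa using hcover) (by positivity)

end Discrete

/-- Discrete Brunn–Minkowski inequality for the lattice point enumerator. -/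
theorem discrete_BrunnMinkowski (n : ℕ) (hn : 1 ≤ n) (lam : ℝ)
    (hlam : lam ∈ Set.Ioo (0 : ℝ) 1)
    (K L : Set (Fin n → ℝ)) (hKne : K.Nonempty) (hLne : L.Nonempty)
    (hKb : Bornology.IsBounded K) (hLb : Bornology.IsBounded L) :
    (1 - lam) * (latG K : ℝ) ^ (1 / (n : ℝ)) + lam * (latG L : ℝ) ^ (1 / (n : ℝ)) ≤
      (latG ((1 - lam) • K + lam • L + cube n (-1) 1) : ℝ) ^ (1 / (n : ℝ)) := by
  obtain ⟨A, hA, hAK, hAsep, hKA⟩ := exists_isUnitSeparated_finset hKb hKne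
  obtain ⟨B, hB, hBL, hBsep, hLB⟩ := exists_isUnitSeparated_finset hLb hLne
  have hT := ((hKb.smul₀ (1 - lam)).add (hLb.smul₀ lam)).add (isBounded_cube n (-1) 1)
  refine le_trans ?_ (mul_card_rpow_add_le_latG hn hlam hA hB hAK hBL hAsep hBsep hT)
  gcongr
  · exact sub_nonneg.2 hlam.2.le
  · exact hlam.1.le
end

section
/- Let n ≥ 1 and let A, B ⊆ ℤⁿ be finite nonempty sets. Then |A + B + {0,1}ⁿ|^{1/n} ≥ |A|^{1/n} + |B|^{1/n}, where + denotes Minkowski (sumset) addition in ℤⁿ and |·| denotes cardinality. -/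
open MeasureTheory Set

open scoped ENNReal NNReal Classical

/-- Dual-Minkowski / Hölder-type inequality: core of the base case. -/
lemma CI_real (n : ℕ) (hn : 1 ≤ n) (x y w v : ℝ)
    (hx : 0 ≤ x) (hy : 0 ≤ y) (hw : 0 ≤ w) (hv : 0 ≤ v) :
    ((x * w) ^ (1 / ((n : ℝ) + 1)) + (y * v) ^ (1 / ((n : ℝ) + 1))) ^ ((n : ℝ) + 1)
      ≤ (x ^ (1 / (n : ℝ)) + y ^ (1 / (n : ℝ))) ^ (n : ℝ) * (w + v) := by
  have hn0 : (0:ℝ) < n := by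
    have : (1:ℝ) ≤ n := by exact_mod_cast hn
    linarith
  have hN0 : (0:ℝ) < (n:ℝ) + 1 := by positivity
  set S₁ : ℝ := x ^ (1 / (n:ℝ)) + y ^ (1 / (n:ℝ)) with hS₁
  have hS₁0 : 0 ≤ S₁ := by positivity
  set S₂ : ℝ := w + v with hS₂
  have hS₂0 : 0 ≤ S₂ := by positivity
  have hrpow_eq_zero : ∀ z : ℝ, 0 ≤ z → z ^ (1 / (n:ℝ)) = 0 → z = 0 := by
    intro z hz h0
    by_contra hne
    exact absurd h0 (ne_of_gt (Real.rpow_pos_of_pos (lt_of_le_of_ne hz (Ne.symm hne)) _))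
  rcases eq_or_lt_of_le hS₁0 with h1 | h1
  · have hxr := Real.rpow_nonneg hx (1 / (n:ℝ))
    have hyr := Real.rpow_nonneg hy (1 / (n:ℝ))
    have hx' : x = 0 := hrpow_eq_zero x hx (by rw [hS₁] at h1; linarith)
    have hy' : y = 0 := hrpow_eq_zero y hy (by rw [hS₁] at h1; linarith)
    subst hx'; subst hy'
    rw [zero_mul, zero_mul, Real.zero_rpow (by positivity), add_zero,
      Real.zero_rpow (by positivity)]
    positivity
  rcases eq_or_lt_of_le hS₂0 with h2 | h2
  · have hw' : w = 0 := by rw [hS₂] at h2; linarith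
    have hv' : v = 0 := by rw [hS₂] at h2; linarith
    subst hw'; subst hv'
    rw [mul_zero, mul_zero, Real.zero_rpow (by positivity), add_zero,
      Real.zero_rpow (by positivity)]
    exact mul_nonneg (Real.rpow_nonneg hS₁0 _) hS₂0
  -- main case : S₁ > 0, S₂ > 0
  set P : ℝ := S₁ ^ (n:ℝ) * S₂ with hP
  have hP0 : 0 < P := by positivity
  have key : ∀ z u : ℝ, 0 ≤ z → 0 ≤ u →
      (z * u) ^ (1 / ((n:ℝ) + 1)) ≤
        ((n:ℝ) / ((n:ℝ)+1) * (z ^ (1 / (n:ℝ)) / S₁) + 1 / ((n:ℝ)+1) * (u / S₂))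
          * P ^ (1 / ((n:ℝ)+1)) := by
    intro z u hz hu
    set α : ℝ := z ^ (1 / (n:ℝ)) / S₁ with hα
    set β : ℝ := u / S₂ with hβ
    have hα0 : 0 ≤ α := by positivity
    have hβ0 : 0 ≤ β := by positivity
    have hz' : z = α ^ (n:ℝ) * S₁ ^ (n:ℝ) := by
      rw [hα, ← Real.mul_rpow (by positivity) hS₁0, div_mul_cancel₀ _ (ne_of_gt h1),
        ← Real.rpow_mul hz, one_div_mul_cancel (ne_of_gt hn0), Real.rpow_one]
    have hu' : u = β * S₂ := by rw [hβ, div_mul_cancel₀ _ (ne_of_gt h2)]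
    have heq : (z * u) ^ (1 / ((n:ℝ) + 1))
        = (α ^ ((n:ℝ) / ((n:ℝ)+1)) * β ^ (1 / ((n:ℝ)+1))) * P ^ (1 / ((n:ℝ)+1)) := by
      have hzu : z * u = (α ^ (n:ℝ) * β) * P := by rw [hz', hu', hP]; ring
      rw [hzu, Real.mul_rpow (by positivity) hP0.le,
        Real.mul_rpow (by positivity) hβ0,
        ← Real.rpow_mul hα0, mul_one_div]
    rw [heq]
    have hgm := Real.geom_mean_le_arith_mean2_weighted
      (by positivity : (0:ℝ) ≤ (n:ℝ)/((n:ℝ)+1)) (by positivity : (0:ℝ) ≤ 1/((n:ℝ)+1))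
      hα0 hβ0 (by field_simp)
    exact mul_le_mul_of_nonneg_right hgm (by positivity)
  have hsum : (x * w) ^ (1 / ((n:ℝ)+1)) + (y * v) ^ (1 / ((n:ℝ)+1))
      ≤ P ^ (1 / ((n:ℝ)+1)) := by
    have k1 := key x w hx hw
    have k2 := key y v hy hv
    have hc : ((n:ℝ) / ((n:ℝ)+1) * (x ^ (1 / (n:ℝ)) / S₁) + 1 / ((n:ℝ)+1) * (w / S₂))
        + ((n:ℝ) / ((n:ℝ)+1) * (y ^ (1 / (n:ℝ)) / S₁) + 1 / ((n:ℝ)+1) * (v / S₂)) = 1 := by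
      rw [hS₁, hS₂] at *
      field_simp
      ring
    calc (x * w) ^ (1 / ((n:ℝ)+1)) + (y * v) ^ (1 / ((n:ℝ)+1))
        ≤ (((n:ℝ) / ((n:ℝ)+1) * (x ^ (1 / (n:ℝ)) / S₁) + 1 / ((n:ℝ)+1) * (w / S₂))
            + ((n:ℝ) / ((n:ℝ)+1) * (y ^ (1 / (n:ℝ)) / S₁) + 1 / ((n:ℝ)+1) * (v / S₂)))
            * P ^ (1 / ((n:ℝ)+1)) := by rw [add_mul]; exact add_le_add k1 k2
      _ = P ^ (1 / ((n:ℝ)+1)) := by rw [hc, one_mul]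
  calc ((x * w) ^ (1 / ((n:ℝ)+1)) + (y * v) ^ (1 / ((n:ℝ)+1))) ^ ((n:ℝ)+1)
      ≤ (P ^ (1 / ((n:ℝ)+1))) ^ ((n:ℝ)+1) :=
        Real.rpow_le_rpow (by positivity) hsum (by positivity)
    _ = P := by
        rw [← Real.rpow_mul hP0.le, one_div_mul_cancel (ne_of_gt hN0), Real.rpow_one]

lemma ALG (N θ F G : ℝ) (hN : 0 < N) (hθ0 : 0 ≤ θ) (hθ1 : θ ≤ 1) (hF : 0 ≤ F) (hG : 0 ≤ G) :
    ((θ*F)^(1/N) + (θ*G)^(1/N))^N + (((1-θ)*F)^(1/N) + ((1-θ)*G)^(1/N))^N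
      = (F^(1/N)+G^(1/N))^N := by
  have h1θ : 0 ≤ 1 - θ := by linarith
  have e : ∀ c : ℝ, 0 ≤ c →
      ((c*F)^(1/N) + (c*G)^(1/N))^N = c * (F^(1/N)+G^(1/N))^N := by
    intro c hc
    rw [Real.mul_rpow hc hF, Real.mul_rpow hc hG, ← mul_add,
      Real.mul_rpow (Real.rpow_nonneg hc _) (by positivity),
      ← Real.rpow_mul hc, one_div_mul_cancel (ne_of_gt hN), Real.rpow_one]
  rw [e θ hθ0, e (1-θ) h1θ, ← add_mul]
  ring

noncomputable def cellVol (a b : ℝ) (t : ℤ) : ℝ≥0∞ :=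
  volume (Set.Ico a b ∩ Set.Ico (t : ℝ) ((t : ℝ) + 1))

noncomputable def mass (φ : ℤ → ℝ≥0∞) (D : Finset ℤ) (a b : ℝ) : ℝ≥0∞ :=
  ∑ t ∈ D, φ t * cellVol a b t

noncomputable def massR (φ : ℤ → ℝ≥0∞) (D : Finset ℤ) (a b : ℝ) : ℝ :=
  ∑ t ∈ D, (φ t).toReal * (max (min b ((t:ℝ)+1) - max a (t:ℝ)) 0)

lemma cellVol_eq (a b : ℝ) (t : ℤ) :
    cellVol a b t = ENNReal.ofReal (min b ((t:ℝ)+1) - max a (t:ℝ)) := by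
  rw [cellVol, Set.Ico_inter_Ico, Real.volume_Ico]

lemma cellVol_ne_top (a b : ℝ) (t : ℤ) : cellVol a b t ≠ ⊤ := by
  rw [cellVol_eq]; exact ENNReal.ofReal_ne_top

lemma cellVol_le_one (a b : ℝ) (t : ℤ) : cellVol a b t ≤ 1 := by
  have : cellVol a b t ≤ volume (Set.Ico (t:ℝ) ((t:ℝ)+1)) :=
    measure_mono inter_subset_right
  rwa [Real.volume_Ico, add_sub_cancel_left, ENNReal.ofReal_one] at this

lemma cellVol_mono (a b a' b' : ℝ) (t : ℤ) (h1 : a ≤ a') (h2 : b' ≤ b) :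
    cellVol a' b' t ≤ cellVol a b t :=
  measure_mono (inter_subset_inter_left _ (Set.Ico_subset_Ico h1 h2))

lemma cellVol_split (a z b : ℝ) (haz : a ≤ z) (hzb : z ≤ b) (t : ℤ) :
    cellVol a z t + cellVol z b t = cellVol a b t := by
  rw [cellVol, cellVol, cellVol, ← measure_union ?hd ?hm, ← union_inter_distrib_right,
    Set.Ico_union_Ico_eq_Ico haz hzb]
  case hd =>
    exact (Set.Ico_disjoint_Ico_same).mono inter_subset_left inter_subset_left
  case hm =>
    exact (measurableSet_Ico.inter measurableSet_Ico)

lemma mass_split (φ : ℤ → ℝ≥0∞) (D : Finset ℤ) (a z b : ℝ) (haz : a ≤ z) (hzb : z ≤ b) :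
    mass φ D a z + mass φ D z b = mass φ D a b := by
  rw [mass, mass, mass, ← Finset.sum_add_distrib]
  refine Finset.sum_congr rfl fun t _ => ?_
  rw [← mul_add, cellVol_split a z b haz hzb]

lemma mass_ne_top (φ : ℤ → ℝ≥0∞) (D : Finset ℤ) (hφ : ∀ t, φ t ≠ ⊤) (a b : ℝ) :
    mass φ D a b ≠ ⊤ := by
  rw [mass]
  exact (ENNReal.sum_lt_top.mpr fun t _ =>
    ENNReal.mul_lt_top (lt_top_iff_ne_top.mpr (hφ t))
      (lt_top_iff_ne_top.mpr (cellVol_ne_top a b t))).ne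

lemma mass_eq_ofReal (φ : ℤ → ℝ≥0∞) (D : Finset ℤ) (hφ : ∀ t, φ t ≠ ⊤) (a b : ℝ) :
    mass φ D a b = ENNReal.ofReal (massR φ D a b) := by
  rw [mass, massR, ENNReal.ofReal_sum_of_nonneg (fun t _ => by positivity)]
  refine Finset.sum_congr rfl fun t _ => ?_
  rw [ENNReal.ofReal_mul ENNReal.toReal_nonneg, ENNReal.ofReal_toReal (hφ t), cellVol_eq]
  congr 1
  rcases le_total (min b ((t:ℝ)+1) - max a (t:ℝ)) 0 with h | h
  · rw [max_eq_right h, ENNReal.ofReal_of_nonpos h, ENNReal.ofReal_zero]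
  · rw [max_eq_left h]

lemma massR_nonneg (φ : ℤ → ℝ≥0∞) (D : Finset ℤ) (a b : ℝ) : 0 ≤ massR φ D a b :=
  Finset.sum_nonneg fun t _ => by positivity

lemma massR_self (φ : ℤ → ℝ≥0∞) (D : Finset ℤ) (a : ℝ) : massR φ D a a = 0 := by
  rw [massR]
  refine Finset.sum_eq_zero fun t _ => ?_
  have h1 : min a ((t:ℝ)+1) - max a (t:ℝ) ≤ 0 := by
    have := min_le_left a ((t:ℝ)+1)
    have := le_max_left a (t:ℝ)
    linarith
  rw [max_eq_right h1, mul_zero]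

lemma massR_continuous (φ : ℤ → ℝ≥0∞) (D : Finset ℤ) (a : ℝ) :
    Continuous (fun y => massR φ D a y) := by
  refine continuous_finset_sum _ fun t _ => Continuous.mul continuous_const ?_
  exact ((continuous_id.min continuous_const).sub continuous_const).max continuous_const

lemma mass_toReal (φ : ℤ → ℝ≥0∞) (D : Finset ℤ) (hφ : ∀ t, φ t ≠ ⊤) (a b : ℝ) :
    (mass φ D a b).toReal = massR φ D a b := by
  rw [mass_eq_ofReal φ D hφ, ENNReal.toReal_ofReal (massR_nonneg φ D a b)]

noncomputable def Tcells (φ : ℤ → ℝ≥0∞) (D : Finset ℤ) (a b : ℝ) : Finset ℤ :=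
  D.filter (fun t => φ t ≠ 0 ∧ cellVol a b t ≠ 0)

lemma mem_Tcells {φ : ℤ → ℝ≥0∞} {D : Finset ℤ} {a b : ℝ} {t : ℤ} :
    t ∈ Tcells φ D a b ↔ t ∈ D ∧ φ t ≠ 0 ∧ cellVol a b t ≠ 0 := by
  simp [Tcells]

lemma Tcells_nonempty {φ : ℤ → ℝ≥0∞} {D : Finset ℤ} {a b : ℝ}
    (hm : mass φ D a b ≠ 0) : (Tcells φ D a b).Nonempty := by
  by_contra hne
  refine hm ?_
  rw [mass]
  refine Finset.sum_eq_zero fun t ht => ?_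
  rcases Classical.em (φ t = 0) with h | h
  · rw [h, zero_mul]
  rcases Classical.em (cellVol a b t = 0) with h' | h'
  · rw [h', mul_zero]
  exact absurd (Finset.nonempty_of_ne_empty (Finset.ne_empty_of_mem
    (mem_Tcells.mpr ⟨ht, h, h'⟩))) hne

lemma cellVol_pos_iff {a b : ℝ} {t : ℤ} :
    cellVol a b t ≠ 0 ↔ max a (t:ℝ) < min b ((t:ℝ)+1) := by
  rw [cellVol_eq, ne_eq, ENNReal.ofReal_eq_zero, not_le, sub_pos]

lemma mass_window_le {φ : ℤ → ℝ≥0∞} {D : Finset ℤ} {a b : ℝ} (hab : b ≤ a) :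
    mass φ D a b = 0 := by
  rw [mass]
  refine Finset.sum_eq_zero fun t ht => ?_
  have : cellVol a b t = 0 := by
    rw [cellVol, Set.Ico_eq_empty (by exact fun h => absurd hab (not_le.mpr h)), empty_inter,
      measure_empty]
  rw [this, mul_zero]
section OneD
open MeasureTheory Set
open scoped ENNReal NNReal Classical

lemma ofReal_form (p q e N : ℝ) (hp : 0 ≤ p) (hq : 0 ≤ q) (he : 0 ≤ e) (hN : 0 ≤ N) :
    ((ENNReal.ofReal p) ^ e + (ENNReal.ofReal q) ^ e) ^ N
      = ENNReal.ofReal ((p ^ e + q ^ e) ^ N) := by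
  rw [ENNReal.ofReal_rpow_of_nonneg hp he, ENNReal.ofReal_rpow_of_nonneg hq he,
    ← ENNReal.ofReal_add (Real.rpow_nonneg hp e) (Real.rpow_nonneg hq e),
    ENNReal.ofReal_rpow_of_nonneg (by positivity) hN]

lemma floor_two_cases {t s : ℤ} {x : ℝ} (h1 : (t:ℝ)+(s:ℝ) ≤ x) (h2 : x < (t:ℝ)+(s:ℝ)+2) :
    ⌊x⌋ = t + s ∨ ⌊x⌋ = t + s + 1 := by
  have l : t + s ≤ ⌊x⌋ := Int.le_floor.mpr (by push_cast; linarith)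
  have u : ⌊x⌋ < t + s + 2 := Int.floor_lt.mpr (by push_cast; linarith)
  omega

lemma notmem_Tcells {φ : ℤ → ℝ≥0∞} {D : Finset ℤ} {a b : ℝ} {t : ℤ}
    (htD : t ∈ D) (ht : t ∉ Tcells φ D a b) : φ t * cellVol a b t = 0 := by
  rcases Classical.em (φ t = 0) with h | h
  · rw [h, zero_mul]
  rcases Classical.em (cellVol a b t = 0) with h' | h'
  · rw [h', mul_zero]
  exact absurd (mem_Tcells.mpr ⟨htD, h, h'⟩) ht

lemma oneD_single (n : ℕ) (hn : 1 ≤ n) (φ ψ h : ℤ → ℝ≥0∞)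
    (D E : Finset ℤ) (hφtop : ∀ t, φ t ≠ ⊤) (hψtop : ∀ s, ψ s ≠ ⊤)
    (hyp : ∀ t s, φ t ≠ 0 → ψ s ≠ 0 →
      ((φ t ^ (1/(n:ℝ)) + ψ s ^ (1/(n:ℝ))) ^ (n:ℝ) ≤ h (t+s) ∧
       (φ t ^ (1/(n:ℝ)) + ψ s ^ (1/(n:ℝ))) ^ (n:ℝ) ≤ h (t+s+1)))
    (a₁ b₁ a₂ b₂ : ℝ) (hm1 : mass φ D a₁ b₁ ≠ 0) (hm2 : mass ψ E a₂ b₂ ≠ 0)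
    (hc1 : (Tcells φ D a₁ b₁).card ≤ 1) (hc2 : (Tcells ψ E a₂ b₂).card ≤ 1) :
    (mass φ D a₁ b₁ ^ (1/((n:ℝ)+1)) + mass ψ E a₂ b₂ ^ (1/((n:ℝ)+1))) ^ ((n:ℝ)+1)
      ≤ ∫⁻ x in Set.Ico (a₁+a₂) (b₁+b₂), h ⌊x⌋ := by
  obtain ⟨t, ht⟩ : ∃ t, Tcells φ D a₁ b₁ = {t} :=
    Finset.card_eq_one.mp (le_antisymm hc1 (Finset.card_pos.mpr (Tcells_nonempty hm1)))
  obtain ⟨s₀, hs⟩ : ∃ s, Tcells ψ E a₂ b₂ = {s} :=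
    Finset.card_eq_one.mp (le_antisymm hc2 (Finset.card_pos.mpr (Tcells_nonempty hm2)))
  have htT : t ∈ Tcells φ D a₁ b₁ := by rw [ht]; exact Finset.mem_singleton_self t
  have hsT : s₀ ∈ Tcells ψ E a₂ b₂ := by rw [hs]; exact Finset.mem_singleton_self s₀
  obtain ⟨htD, hφt, hcv1⟩ := mem_Tcells.mp htT
  obtain ⟨hsE, hψs, hcv2⟩ := mem_Tcells.mp hsT
  have hmass1 : mass φ D a₁ b₁ = φ t * cellVol a₁ b₁ t := by
    rw [mass]
    refine Finset.sum_eq_single_of_mem t htD fun t' ht' hne => ?_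
    refine notmem_Tcells ht' ?_
    rw [ht, Finset.mem_singleton]; exact hne
  have hmass2 : mass ψ E a₂ b₂ = ψ s₀ * cellVol a₂ b₂ s₀ := by
    rw [mass]
    refine Finset.sum_eq_single_of_mem s₀ hsE fun s' hs' hne => ?_
    refine notmem_Tcells hs' ?_
    rw [hs, Finset.mem_singleton]; exact hne
  set x : ℝ := (φ t).toReal with hxdef
  set y : ℝ := (ψ s₀).toReal with hydef
  have hx0 : 0 ≤ x := ENNReal.toReal_nonneg
  have hy0 : 0 ≤ y := ENNReal.toReal_nonneg
  have hφeq : φ t = ENNReal.ofReal x := (ENNReal.ofReal_toReal (hφtop t)).symm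
  have hψeq : ψ s₀ = ENNReal.ofReal y := (ENNReal.ofReal_toReal (hψtop s₀)).symm
  set w : ℝ := min b₁ ((t:ℝ)+1) - max a₁ (t:ℝ) with hwdef
  set v : ℝ := min b₂ ((s₀:ℝ)+1) - max a₂ (s₀:ℝ) with hvdef
  have hw : 0 < w := sub_pos.mpr (cellVol_pos_iff.mp hcv1)
  have hv : 0 < v := sub_pos.mpr (cellVol_pos_iff.mp hcv2)
  have hm1eq : mass φ D a₁ b₁ = ENNReal.ofReal (x * w) := by
    rw [hmass1, hφeq, cellVol_eq, ← ENNReal.ofReal_mul hx0]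
  have hm2eq : mass ψ E a₂ b₂ = ENNReal.ofReal (y * v) := by
    rw [hmass2, hψeq, cellVol_eq, ← ENNReal.ofReal_mul hy0]
  set C : ℝ≥0∞ := (φ t ^ (1/(n:ℝ)) + ψ s₀ ^ (1/(n:ℝ))) ^ (n:ℝ) with hCdef
  obtain ⟨hyp1, hyp2⟩ := hyp t s₀ hφt hψs
  set J : Set ℝ := Set.Ico (max a₁ (t:ℝ) + max a₂ (s₀:ℝ))
    (min b₁ ((t:ℝ)+1) + min b₂ ((s₀:ℝ)+1)) with hJdef
  have hJsub : J ⊆ Set.Ico (a₁+a₂) (b₁+b₂) :=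
    Set.Ico_subset_Ico (add_le_add (le_max_left _ _) (le_max_left _ _))
      (add_le_add (min_le_left _ _) (min_le_left _ _))
  have hpoint : ∀ z ∈ J, C ≤ h ⌊z⌋ := by
    intro z hz
    have h1 : (t:ℝ) + (s₀:ℝ) ≤ z :=
      le_trans (add_le_add (le_max_right a₁ (t:ℝ)) (le_max_right a₂ (s₀:ℝ))) hz.1
    have h2 : z < (t:ℝ) + (s₀:ℝ) + 2 :=
      lt_of_lt_of_le hz.2 (by
        have := min_le_right b₁ ((t:ℝ)+1)
        have := min_le_right b₂ ((s₀:ℝ)+1)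
        linarith)
    rcases floor_two_cases h1 h2 with hfl | hfl
    · rw [hfl]; exact hyp1
    · rw [hfl]; exact hyp2
  have hvolJ : volume J = ENNReal.ofReal (w + v) := by
    rw [hJdef, Real.volume_Ico]
    congr 1
    rw [hwdef, hvdef]; ring
  have step1 : C * ENNReal.ofReal (w + v) ≤ ∫⁻ z in Set.Ico (a₁+a₂) (b₁+b₂), h ⌊z⌋ := by
    calc C * ENNReal.ofReal (w + v) = C * volume J := by rw [hvolJ]
      _ = ∫⁻ _ in J, C := (setLIntegral_const J C).symm
      _ ≤ ∫⁻ z in J, h ⌊z⌋ :=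
          setLIntegral_mono (measurable_from_top.comp Int.measurable_floor) hpoint
      _ ≤ ∫⁻ z in Set.Ico (a₁+a₂) (b₁+b₂), h ⌊z⌋ := lintegral_mono_set hJsub
  refine le_trans ?_ step1
  have hCeq : C = ENNReal.ofReal ((x ^ (1/(n:ℝ)) + y ^ (1/(n:ℝ))) ^ (n:ℝ)) := by
    rw [hCdef, hφeq, hψeq, ofReal_form x y _ _ hx0 hy0 (by positivity) (by positivity)]
  rw [hm1eq, hm2eq, hCeq,
    ofReal_form (x*w) (y*v) _ _ (by positivity) (by positivity) (by positivity) (by positivity),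
    ← ENNReal.ofReal_mul (by positivity)]
  exact ENNReal.ofReal_le_ofReal (CI_real n hn x y w v hx0 hy0 hw.le hv.le)

end OneD
section OneDStep
open MeasureTheory Set
open scoped ENNReal NNReal Classical

/-- The inductive statement for the one-dimensional functional lemma. -/
def OneDP (n k : ℕ) : Prop :=
  ∀ (φ ψ h : ℤ → ℝ≥0∞) (D E : Finset ℤ),
    (∀ t, φ t ≠ ⊤) → (∀ s, ψ s ≠ ⊤) →
    (∀ t s, φ t ≠ 0 → ψ s ≠ 0 →
      ((φ t ^ (1/(n:ℝ)) + ψ s ^ (1/(n:ℝ))) ^ (n:ℝ) ≤ h (t+s) ∧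
       (φ t ^ (1/(n:ℝ)) + ψ s ^ (1/(n:ℝ))) ^ (n:ℝ) ≤ h (t+s+1))) →
    ∀ a₁ b₁ a₂ b₂ : ℝ, mass φ D a₁ b₁ ≠ 0 → mass ψ E a₂ b₂ ≠ 0 →
      (Tcells φ D a₁ b₁).card + (Tcells ψ E a₂ b₂).card ≤ k →
      (mass φ D a₁ b₁ ^ (1/((n:ℝ)+1)) + mass ψ E a₂ b₂ ^ (1/((n:ℝ)+1))) ^ ((n:ℝ)+1)
        ≤ ∫⁻ x in Set.Ico (a₁+a₂) (b₁+b₂), h ⌊x⌋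

set_option maxHeartbeats 1000000 in
lemma oneD_step (n k : ℕ) (hn : 1 ≤ n) (IH : OneDP n k)
    (φ ψ h : ℤ → ℝ≥0∞) (D E : Finset ℤ)
    (hφtop : ∀ t, φ t ≠ ⊤) (hψtop : ∀ s, ψ s ≠ ⊤)
    (hyp : ∀ t s, φ t ≠ 0 → ψ s ≠ 0 →
      ((φ t ^ (1/(n:ℝ)) + ψ s ^ (1/(n:ℝ))) ^ (n:ℝ) ≤ h (t+s) ∧
       (φ t ^ (1/(n:ℝ)) + ψ s ^ (1/(n:ℝ))) ^ (n:ℝ) ≤ h (t+s+1)))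
    (a₁ b₁ a₂ b₂ : ℝ) (hm1 : mass φ D a₁ b₁ ≠ 0) (hm2 : mass ψ E a₂ b₂ ≠ 0)
    (h2T : 2 ≤ (Tcells φ D a₁ b₁).card)
    (hk : (Tcells φ D a₁ b₁).card + (Tcells ψ E a₂ b₂).card ≤ k + 1) :
    (mass φ D a₁ b₁ ^ (1/((n:ℝ)+1)) + mass ψ E a₂ b₂ ^ (1/((n:ℝ)+1))) ^ ((n:ℝ)+1)
      ≤ ∫⁻ x in Set.Ico (a₁+a₂) (b₁+b₂), h ⌊x⌋ := by
  have hT₁ne : (Tcells φ D a₁ b₁).Nonempty := Tcells_nonempty hm1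
  set M : ℤ := (Tcells φ D a₁ b₁).max' hT₁ne with hMdef
  have hMT : M ∈ Tcells φ D a₁ b₁ := (Tcells φ D a₁ b₁).max'_mem hT₁ne
  obtain ⟨t', ht'T, ht'ne⟩ :=
    Finset.exists_mem_ne (lt_of_lt_of_le one_lt_two h2T) M
  have ht'lt : t' < M := lt_of_le_of_ne (Finset.le_max' _ _ ht'T) ht'ne
  obtain ⟨hMD, hφM, hcvM⟩ := mem_Tcells.mp hMT
  obtain ⟨ht'D, hφt', hcvt'⟩ := mem_Tcells.mp ht'T
  have hposM : max a₁ (M:ℝ) < min b₁ ((M:ℝ)+1) := cellVol_pos_iff.mp hcvM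
  have hpost' : max a₁ (t':ℝ) < min b₁ ((t':ℝ)+1) := cellVol_pos_iff.mp hcvt'
  have ht'M : (t':ℝ) + 1 ≤ (M:ℝ) := by exact_mod_cast ht'lt
  have ha₁M : a₁ < ((M:ℝ)) := by
    have h1 := le_max_left a₁ (t':ℝ)
    have h2 := min_le_right b₁ ((t':ℝ)+1)
    linarith
  have hMb₁ : ((M:ℝ)) < b₁ := by
    have h1 := le_max_right a₁ (M:ℝ)
    have h2 := min_le_left b₁ ((M:ℝ)+1)
    linarith
  -- positivity of the two halves of f-mass
  have hcvL : cellVol a₁ ((M:ℝ)) t' ≠ 0 := by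
    refine cellVol_pos_iff.mpr (lt_min ?_ ?_)
    · have := min_le_right b₁ ((t':ℝ)+1); linarith
    · have := min_le_right b₁ ((t':ℝ)+1); linarith
  have hcvR : cellVol ((M:ℝ)) b₁ M ≠ 0 := by
    refine cellVol_pos_iff.mpr ?_
    rw [max_self]
    exact lt_min hMb₁ (by linarith)
  have hFLne : mass φ D a₁ ((M:ℝ)) ≠ 0 := by
    intro h0
    rw [mass] at h0
    have hle : φ t' * cellVol a₁ ((M:ℝ)) t' ≤ ∑ u ∈ D, φ u * cellVol a₁ ((M:ℝ)) u :=
      Finset.single_le_sum (f := fun u => φ u * cellVol a₁ ((M:ℝ)) u)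
        (fun i _ => zero_le) ht'D
    rw [h0, le_zero_iff] at hle
    exact (mul_ne_zero hφt' hcvL) hle
  have hFRne : mass φ D ((M:ℝ)) b₁ ≠ 0 := by
    intro h0
    rw [mass] at h0
    have hle : φ M * cellVol ((M:ℝ)) b₁ M ≤ ∑ u ∈ D, φ u * cellVol ((M:ℝ)) b₁ u :=
      Finset.single_le_sum (f := fun u => φ u * cellVol ((M:ℝ)) b₁ u)
        (fun i _ => zero_le) hMD
    rw [h0, le_zero_iff] at hle
    exact (mul_ne_zero hφM hcvR) hle
  have hsplitF : mass φ D a₁ ((M:ℝ)) + mass φ D ((M:ℝ)) b₁ = mass φ D a₁ b₁ :=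
    mass_split φ D a₁ ((M:ℝ)) b₁ ha₁M.le hMb₁.le
  -- real versions
  have hFtop := mass_ne_top φ D hφtop a₁ b₁
  have hFLtop := mass_ne_top φ D hφtop a₁ ((M:ℝ))
  have hFRtop := mass_ne_top φ D hφtop ((M:ℝ)) b₁
  have hGtop := mass_ne_top ψ E hψtop a₂ b₂
  set Fr : ℝ := (mass φ D a₁ b₁).toReal with hFrdef
  set Gr : ℝ := (mass ψ E a₂ b₂).toReal with hGrdef
  have hFrpos : 0 < Fr := ENNReal.toReal_pos hm1 hFtop
  have hGrpos : 0 < Gr := ENNReal.toReal_pos hm2 hGtop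
  have hFLrpos : 0 < (mass φ D a₁ ((M:ℝ))).toReal := ENNReal.toReal_pos hFLne hFLtop
  have hFRrpos : 0 < (mass φ D ((M:ℝ)) b₁).toReal := ENNReal.toReal_pos hFRne hFRtop
  have hFradd : Fr = (mass φ D a₁ ((M:ℝ))).toReal + (mass φ D ((M:ℝ)) b₁).toReal := by
    rw [hFrdef, ← hsplitF, ENNReal.toReal_add hFLtop hFRtop]
  set θ : ℝ := (mass φ D a₁ ((M:ℝ))).toReal / Fr with hθdef
  have hθpos : 0 < θ := div_pos hFLrpos hFrpos
  have hθlt1 : θ < 1 := (div_lt_one hFrpos).mpr (by linarith)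
  have hθF : θ * Fr = (mass φ D a₁ ((M:ℝ))).toReal := div_mul_cancel₀ _ (ne_of_gt hFrpos)
  have hmFL : mass φ D a₁ ((M:ℝ)) = ENNReal.ofReal (θ * Fr) := by
    rw [hθF, ENNReal.ofReal_toReal hFLtop]
  have hmFR : mass φ D ((M:ℝ)) b₁ = ENNReal.ofReal ((1-θ) * Fr) := by
    have he : (1-θ) * Fr = (mass φ D ((M:ℝ)) b₁).toReal := by
      have h' : (1-θ) * Fr = Fr - θ * Fr := by ring
      rw [h', hθF, hFradd]; ring
    rw [he, ENNReal.ofReal_toReal hFRtop]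
  -- the g-side split via IVT
  have ha₂b₂ : a₂ ≤ b₂ := by
    by_contra hc
    exact hm2 (mass_window_le (le_of_not_ge hc))
  have hGr : massR ψ E a₂ b₂ = Gr := (mass_toReal ψ E hψtop a₂ b₂).symm
  have hivt := intermediate_value_Icc ha₂b₂ ((massR_continuous ψ E a₂).continuousOn
    (s := Set.Icc a₂ b₂))
  have hmem : θ * Gr ∈ Set.Icc (massR ψ E a₂ a₂) (massR ψ E a₂ b₂) := by
    rw [massR_self, hGr]
    constructor
    · positivity
    · nlinarith
  obtain ⟨y₀, hy₀mem, hy₀⟩ := hivt hmem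
  have hmGL : mass ψ E a₂ y₀ = ENNReal.ofReal (θ * Gr) := by
    rw [mass_eq_ofReal ψ E hψtop]
    exact congrArg ENNReal.ofReal hy₀
  have hGLtop := mass_ne_top ψ E hψtop a₂ y₀
  have hGRtop := mass_ne_top ψ E hψtop y₀ b₂
  have hsplitG : mass ψ E a₂ y₀ + mass ψ E y₀ b₂ = mass ψ E a₂ b₂ :=
    mass_split ψ E a₂ y₀ b₂ hy₀mem.1 hy₀mem.2
  have hGradd : θ * Gr + (mass ψ E y₀ b₂).toReal = Gr := by
    have hh := congrArg ENNReal.toReal hsplitG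
    rwa [ENNReal.toReal_add hGLtop hGRtop, hmGL,
      ENNReal.toReal_ofReal (by positivity), ← hGrdef] at hh
  have hmGR : mass ψ E y₀ b₂ = ENNReal.ofReal ((1-θ) * Gr) := by
    have he : (1-θ) * Gr = (mass ψ E y₀ b₂).toReal := by
      have h' : (1-θ) * Gr = Gr - θ * Gr := by ring
      rw [h']; linarith [hGradd]
    rw [he, ENNReal.ofReal_toReal hGRtop]
  have hGLne : mass ψ E a₂ y₀ ≠ 0 := by
    rw [hmGL, ne_eq, ENNReal.ofReal_eq_zero, not_le]
    positivity
  have hGRne : mass ψ E y₀ b₂ ≠ 0 := by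
    rw [hmGR, ne_eq, ENNReal.ofReal_eq_zero, not_le]
    have h1θ : (0:ℝ) < 1 - θ := by linarith
    positivity
  -- cardinality bookkeeping
  have hsub1 : Tcells φ D a₁ ((M:ℝ)) ⊆ (Tcells φ D a₁ b₁).erase M := by
    intro u hu
    obtain ⟨huD, hφu, hcvu⟩ := mem_Tcells.mp hu
    refine Finset.mem_erase.mpr ⟨?_, mem_Tcells.mpr ⟨huD, hφu, ?_⟩⟩
    · rintro rfl
      apply hcvu
      rw [cellVol_eq, ENNReal.ofReal_eq_zero]
      have h1 := min_le_left ((M:ℝ)) (((M:ℝ))+1)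
      have h2 := le_max_right a₁ ((M:ℝ))
      linarith
    · intro h0
      apply hcvu
      have hle := cellVol_mono a₁ b₁ a₁ ((M:ℝ)) u le_rfl hMb₁.le
      rw [h0, le_zero_iff] at hle
      exact hle
  have hcard1 : (Tcells φ D a₁ ((M:ℝ))).card ≤ (Tcells φ D a₁ b₁).card - 1 := by
    have := Finset.card_le_card hsub1
    rwa [Finset.card_erase_of_mem hMT] at this
  have hsub2 : Tcells φ D ((M:ℝ)) b₁ ⊆ {M} := by
    intro u hu
    obtain ⟨huD, hφu, hcvu⟩ := mem_Tcells.mp hu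
    have huT : u ∈ Tcells φ D a₁ b₁ := by
      refine mem_Tcells.mpr ⟨huD, hφu, fun h0 => hcvu ?_⟩
      have hle := cellVol_mono a₁ b₁ ((M:ℝ)) b₁ u ha₁M.le le_rfl
      rw [h0, le_zero_iff] at hle
      exact hle
    have huM : u ≤ M := Finset.le_max' _ _ huT
    have huM2 : ¬ u < M := by
      intro hlt
      apply hcvu
      rw [cellVol_eq, ENNReal.ofReal_eq_zero]
      have h1 : (u:ℝ) + 1 ≤ ((M:ℝ)) := by exact_mod_cast hlt
      have h2 := min_le_right b₁ ((u:ℝ)+1)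
      have h3 := le_max_left ((M:ℝ)) (u:ℝ)
      linarith
    have : u = M := le_antisymm huM (not_lt.mp huM2)
    simp [this]
  have hcard2 : (Tcells φ D ((M:ℝ)) b₁).card ≤ 1 := by
    have := Finset.card_le_card hsub2
    simpa using this
  have hsubG : ∀ c d : ℝ, a₂ ≤ c → d ≤ b₂ → Tcells ψ E c d ⊆ Tcells ψ E a₂ b₂ := by
    intro c d hc hd u hu
    obtain ⟨huE, hψu, hcvu⟩ := mem_Tcells.mp hu
    refine mem_Tcells.mpr ⟨huE, hψu, fun h0 => hcvu ?_⟩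
    have hle := cellVol_mono a₂ b₂ c d u hc hd
    rw [h0, le_zero_iff] at hle
    exact hle
  have hcardGL : (Tcells ψ E a₂ y₀).card ≤ (Tcells ψ E a₂ b₂).card :=
    Finset.card_le_card (hsubG a₂ y₀ le_rfl hy₀mem.2)
  have hcardGR : (Tcells ψ E y₀ b₂).card ≤ (Tcells ψ E a₂ b₂).card :=
    Finset.card_le_card (hsubG y₀ b₂ hy₀mem.1 le_rfl)
  -- apply the induction hypothesis to the two halves
  have IHL := IH φ ψ h D E hφtop hψtop hyp a₁ ((M:ℝ)) a₂ y₀ hFLne hGLne (by omega)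
  have IHR := IH φ ψ h D E hφtop hψtop hyp ((M:ℝ)) b₁ y₀ b₂ hFRne hGRne (by omega)
  -- split the integral
  have hIsplit : ∫⁻ x in Set.Ico (a₁+a₂) (b₁+b₂), h ⌊x⌋
      = (∫⁻ x in Set.Ico (a₁+a₂) (((M:ℝ))+y₀), h ⌊x⌋)
        + ∫⁻ x in Set.Ico (((M:ℝ))+y₀) (b₁+b₂), h ⌊x⌋ := by
    rw [← lintegral_union measurableSet_Ico Set.Ico_disjoint_Ico_same,
      Set.Ico_union_Ico_eq_Ico (add_le_add ha₁M.le hy₀mem.1)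
        (add_le_add hMb₁.le hy₀mem.2)]
  -- final algebra
  have hN0 : (0:ℝ) < (n:ℝ) + 1 := by positivity
  calc (mass φ D a₁ b₁ ^ (1/((n:ℝ)+1)) + mass ψ E a₂ b₂ ^ (1/((n:ℝ)+1))) ^ ((n:ℝ)+1)
      = ENNReal.ofReal ((Fr ^ (1/((n:ℝ)+1)) + Gr ^ (1/((n:ℝ)+1))) ^ ((n:ℝ)+1)) := by
        rw [← ENNReal.ofReal_toReal hFtop, ← ENNReal.ofReal_toReal hGtop, ← hFrdef, ← hGrdef,
          ofReal_form Fr Gr _ _ hFrpos.le hGrpos.le (by positivity) hN0.le]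
    _ = ENNReal.ofReal (((θ*Fr) ^ (1/((n:ℝ)+1)) + (θ*Gr) ^ (1/((n:ℝ)+1))) ^ ((n:ℝ)+1))
        + ENNReal.ofReal ((((1-θ)*Fr) ^ (1/((n:ℝ)+1)) + ((1-θ)*Gr) ^ (1/((n:ℝ)+1))) ^ ((n:ℝ)+1)) := by
        have h1θ : (0:ℝ) ≤ 1 - θ := by linarith
        rw [← ALG ((n:ℝ)+1) θ Fr Gr hN0 hθpos.le hθlt1.le hFrpos.le hGrpos.le,
          ENNReal.ofReal_add
            (Real.rpow_nonneg (add_nonneg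
              (Real.rpow_nonneg (by positivity) _)
              (Real.rpow_nonneg (by positivity) _)) _)
            (Real.rpow_nonneg (add_nonneg
              (Real.rpow_nonneg (mul_nonneg h1θ hFrpos.le) _)
              (Real.rpow_nonneg (mul_nonneg h1θ hGrpos.le) _)) _)]
    _ ≤ (∫⁻ x in Set.Ico (a₁+a₂) (((M:ℝ))+y₀), h ⌊x⌋)
        + ∫⁻ x in Set.Ico (((M:ℝ))+y₀) (b₁+b₂), h ⌊x⌋ := by
        refine add_le_add ?_ ?_
        · rw [← ofReal_form (θ*Fr) (θ*Gr) _ _ (by positivity) (by positivity)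
            (by positivity) hN0.le, ← hmFL, ← hmGL]
          exact IHL
        · have h1θ : (0:ℝ) ≤ 1 - θ := by linarith
          rw [← ofReal_form ((1-θ)*Fr) ((1-θ)*Gr) _ _ (mul_nonneg h1θ hFrpos.le)
            (mul_nonneg h1θ hGrpos.le) (by positivity) hN0.le, ← hmFR, ← hmGR]
          exact IHR
    _ = ∫⁻ x in Set.Ico (a₁+a₂) (b₁+b₂), h ⌊x⌋ := hIsplit.symm

end OneDStep
section OneDAll
open MeasureTheory Set
open scoped ENNReal NNReal Classical

lemma oneD_all (n : ℕ) (hn : 1 ≤ n) : ∀ k, OneDP n k := by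
  intro k
  induction k with
  | zero =>
    intro φ ψ h D E hφtop hψtop hyp a₁ b₁ a₂ b₂ hm1 hm2 hk
    exfalso
    have h1 := Finset.card_pos.mpr (Tcells_nonempty hm1)
    have h2 := Finset.card_pos.mpr (Tcells_nonempty hm2)
    omega
  | succ k IH =>
    intro φ ψ h D E hφtop hψtop hyp a₁ b₁ a₂ b₂ hm1 hm2 hk
    by_cases h1 : 2 ≤ (Tcells φ D a₁ b₁).card
    · exact oneD_step n k hn IH φ ψ h D E hφtop hψtop hyp a₁ b₁ a₂ b₂ hm1 hm2 h1 hk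
    by_cases h2 : 2 ≤ (Tcells ψ E a₂ b₂).card
    · have hyp' : ∀ s t, ψ s ≠ 0 → φ t ≠ 0 →
          ((ψ s ^ (1/(n:ℝ)) + φ t ^ (1/(n:ℝ))) ^ (n:ℝ) ≤ h (s+t) ∧
           (ψ s ^ (1/(n:ℝ)) + φ t ^ (1/(n:ℝ))) ^ (n:ℝ) ≤ h (s+t+1)) := by
        intro s t hs ht
        obtain ⟨c1, c2⟩ := hyp t s ht hs
        constructor
        · rw [add_comm (ψ s ^ (1/(n:ℝ))) (φ t ^ (1/(n:ℝ))), add_comm s t]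
          exact c1
        · rw [add_comm (ψ s ^ (1/(n:ℝ))) (φ t ^ (1/(n:ℝ))), add_comm s t]
          exact c2
      have hsw := oneD_step n k hn IH ψ φ h E D hψtop hφtop hyp'
        a₂ b₂ a₁ b₁ hm2 hm1 h2 (by omega)
      rw [add_comm (mass ψ E a₂ b₂ ^ (1/((n:ℝ)+1))) (mass φ D a₁ b₁ ^ (1/((n:ℝ)+1))),
        add_comm a₂ a₁, add_comm b₂ b₁] at hsw
      exact hsw
    · exact oneD_single n hn φ ψ h D E hφtop hψtop hyp a₁ b₁ a₂ b₂ hm1 hm2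
        (by omega) (by omega)

/-- The one-dimensional functional Brunn–Minkowski-type lemma for lattice step
functions, with arbitrary real windows. -/
lemma oneD (n : ℕ) (hn : 1 ≤ n) (φ ψ h : ℤ → ℝ≥0∞) (D E : Finset ℤ)
    (hφtop : ∀ t, φ t ≠ ⊤) (hψtop : ∀ s, ψ s ≠ ⊤)
    (hyp : ∀ t s, φ t ≠ 0 → ψ s ≠ 0 →
      ((φ t ^ (1/(n:ℝ)) + ψ s ^ (1/(n:ℝ))) ^ (n:ℝ) ≤ h (t+s) ∧
       (φ t ^ (1/(n:ℝ)) + ψ s ^ (1/(n:ℝ))) ^ (n:ℝ) ≤ h (t+s+1)))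
    (a₁ b₁ a₂ b₂ : ℝ) (hm1 : mass φ D a₁ b₁ ≠ 0) (hm2 : mass ψ E a₂ b₂ ≠ 0) :
    (mass φ D a₁ b₁ ^ (1/((n:ℝ)+1)) + mass ψ E a₂ b₂ ^ (1/((n:ℝ)+1))) ^ ((n:ℝ)+1)
      ≤ ∫⁻ x in Set.Ico (a₁+a₂) (b₁+b₂), h ⌊x⌋ :=
  oneD_all n hn ((Tcells φ D a₁ b₁).card + (Tcells ψ E a₂ b₂).card)
    φ ψ h D E hφtop hψtop hyp a₁ b₁ a₂ b₂ hm1 hm2 le_rfl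

end OneDAll
section DimInd
open MeasureTheory Set
open scoped ENNReal NNReal Classical Pointwise

lemma lint_floor_le (c : ℤ → ℝ≥0∞) (U : Finset ℤ) (hc : ∀ u, u ∉ U → c u = 0) (a b : ℝ) :
    ∫⁻ x in Set.Ico a b, c ⌊x⌋ ≤ ∑ u ∈ U, c u := by
  refine le_trans (setLIntegral_le_lintegral _ _) (le_of_eq ?_)
  have hU : (volume : Measure ℝ) = volume.restrict (⋃ u : ℤ, Set.Ico (u:ℝ) ((u:ℝ)+1)) := by
    rw [iUnion_Ico_intCast, Measure.restrict_univ]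
  calc ∫⁻ x, c ⌊x⌋
      = ∫⁻ x in ⋃ u : ℤ, Set.Ico (u:ℝ) ((u:ℝ)+1), c ⌊x⌋ := by rw [← hU]
    _ = ∑' u : ℤ, ∫⁻ x in Set.Ico (u:ℝ) ((u:ℝ)+1), c ⌊x⌋ := by
        refine lintegral_iUnion (fun u => measurableSet_Ico) ?_ _
        intro u v huv
        simp only [Function.onFun]
        refine Set.disjoint_left.mpr fun x hx hx' => huv ?_
        have h1 : ⌊x⌋ = u := Int.floor_eq_iff.mpr ⟨hx.1, hx.2⟩
        have h2 : ⌊x⌋ = v := Int.floor_eq_iff.mpr ⟨hx'.1, hx'.2⟩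
        omega
    _ = ∑' u : ℤ, c u := by
        refine tsum_congr fun u => ?_
        rw [setLIntegral_congr_fun measurableSet_Ico
          (fun x hx => by
            rw [Int.floor_eq_iff.mpr ⟨hx.1, hx.2⟩]),
          setLIntegral_const, Real.volume_Ico]
        simp
    _ = ∑ u ∈ U, c u := tsum_eq_sum hc

lemma slice_sum {α : Type*} (S : Set (ℤ × α)) (hS : S.Finite) (U : Finset ℤ)
    (hU : ∀ t : ℤ, {x | (t, x) ∈ S}.Nonempty → t ∈ U) :
    ∑ t ∈ U, ({x | (t, x) ∈ S}).ncard = S.ncard := by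
  classical
  have hfin : ∀ t : ℤ, {x | (t, x) ∈ S}.Finite := fun t =>
    Set.Finite.preimage (f := fun x => (t, x)) (fun x _ y _ hxy => congrArg Prod.snd hxy) hS
  rw [Set.ncard_eq_toFinset_card S hS,
    Finset.card_eq_sum_card_fiberwise (f := Prod.fst) (t := U)
      (fun p hp => hU p.1 ⟨p.2, by simpa using hS.mem_toFinset.mp hp⟩)]
  refine Finset.sum_congr rfl fun t _ => ?_
  rw [Set.ncard_eq_toFinset_card _ (hfin t)]
  refine Finset.card_bij (fun x _ => ((t, x) : ℤ × α)) ?_ ?_ ?_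
  · intro x hx
    rw [Set.Finite.mem_toFinset] at hx
    exact Finset.mem_filter.mpr ⟨hS.mem_toFinset.mpr hx, rfl⟩
  · intro x hx y hy hxy
    exact congrArg Prod.snd hxy
  · intro p hp
    rw [Finset.mem_filter] at hp
    obtain ⟨hp1, hp2⟩ := hp
    refine ⟨p.2, ?_, ?_⟩
    · rw [Set.Finite.mem_toFinset]
      show (t, p.2) ∈ S
      rw [← hp2]
      simpa using hS.mem_toFinset.mp hp1
    · exact Prod.ext hp2.symm rfl

lemma oneDim_sets (A B : Set ℤ) (hA : A.Finite) (hB : B.Finite)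
    (hAne : A.Nonempty) (hBne : B.Nonempty) :
    A.ncard + B.ncard ≤ (A + B + ({0, 1} : Set ℤ)).ncard := by
  classical
  have hQfin : ({0, 1} : Set ℤ).Finite := (Set.finite_singleton 1).insert 0
  have hCfin : (A + B + ({0, 1} : Set ℤ)).Finite := (hA.add hB).add hQfin
  have hAne' : hA.toFinset.Nonempty := by rwa [Set.Finite.toFinset_nonempty]
  have hBne' : hB.toFinset.Nonempty := by rwa [Set.Finite.toFinset_nonempty]
  set amax : ℤ := hA.toFinset.max' hAne' with hamaxdef
  set bmin : ℤ := hB.toFinset.min' hBne' with hbmindef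
  have hamem : amax ∈ A := hA.mem_toFinset.mp (Finset.max'_mem _ _)
  have hbmem : bmin ∈ B := hB.mem_toFinset.mp (Finset.min'_mem _ _)
  have hale : ∀ a ∈ A, a ≤ amax := fun a ha => Finset.le_max' _ a (hA.mem_toFinset.mpr ha)
  have hble : ∀ b ∈ B, bmin ≤ b := fun b hb => Finset.min'_le _ b (hB.mem_toFinset.mpr hb)
  have h1 : (fun x => x + bmin) '' A ⊆ A + B + ({0, 1} : Set ℤ) := by
    rintro _ ⟨a, ha, rfl⟩
    have h0 : (0:ℤ) ∈ ({0, 1} : Set ℤ) := by simp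
    have := Set.add_mem_add (Set.add_mem_add ha hbmem) h0
    simpa using this
  have h2 : (fun x => amax + 1 + x) '' B ⊆ A + B + ({0, 1} : Set ℤ) := by
    rintro _ ⟨b, hb, rfl⟩
    have h0 : (1:ℤ) ∈ ({0, 1} : Set ℤ) := by simp
    have := Set.add_mem_add (Set.add_mem_add hamem hb) h0
    have he : amax + b + 1 = amax + 1 + b := by ring
    rwa [he] at this
  have hdisj : Disjoint ((fun x => x + bmin) '' A) ((fun x => amax + 1 + x) '' B) := by
    rw [Set.disjoint_left]
    rintro _ ⟨a, ha, rfl⟩ ⟨b, hb, hEq⟩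
    have ha' := hale a ha
    have hb' := hble b hb
    have hEq' : amax + 1 + b = a + bmin := hEq
    omega
  calc A.ncard + B.ncard
      = ((fun x => x + bmin) '' A).ncard + ((fun x => amax + 1 + x) '' B).ncard := by
        rw [Set.ncard_image_of_injective _ (add_left_injective bmin),
          Set.ncard_image_of_injective _ (add_right_injective (amax + 1))]
    _ = (((fun x => x + bmin) '' A) ∪ ((fun x => amax + 1 + x) '' B)).ncard :=
        (Set.ncard_union_eq hdisj (hA.image _) (hB.image _)).symm
    _ ≤ (A + B + ({0, 1} : Set ℤ)).ncard :=
        Set.ncard_le_ncard (Set.union_subset h1 h2) hCfin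

end DimInd
section Main
open MeasureTheory Set
open scoped ENNReal NNReal Classical Pointwise

def Qcube (n : ℕ) : Set (Fin n → ℤ) := {ε | ∀ i, ε i = 0 ∨ ε i = 1}

lemma Qcube_finite (n : ℕ) : (Qcube n).Finite := by
  refine Set.Finite.subset (Set.Finite.pi (t := fun _ : Fin n => ({0, 1} : Set ℤ))
    (fun _ => (Set.finite_singleton 1).insert 0)) ?_
  intro ε hε
  rw [Set.mem_pi]
  intro i _
  rcases hε i with h | h <;> simp [h]

lemma Qcube_nonempty (n : ℕ) : (Qcube n).Nonempty := ⟨0, fun _ => Or.inl rfl⟩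

lemma slice_finite {α : Type*} {S : Set (ℤ × α)} (hS : S.Finite) (t : ℤ) :
    {x | (t, x) ∈ S}.Finite :=
  Set.Finite.preimage (f := fun x => (t, x)) (fun x _ y _ hxy => congrArg Prod.snd hxy) hS

def e1 : (Fin 1 → ℤ) ≃+ ℤ where
  toFun f := f 0
  invFun z := fun _ => z
  left_inv f := funext fun i => by rw [Fin.eq_zero i]
  right_inv z := rfl
  map_add' f g := rfl

def eS (n : ℕ) : (Fin (n+1) → ℤ) ≃+ ℤ × (Fin n → ℤ) where
  toFun f := (f 0, fun i => f i.succ)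
  invFun p := Fin.cons p.1 p.2
  left_inv f := by
    show (Fin.cons (f 0) (fun i => f i.succ) : Fin (n+1) → ℤ) = f
    funext i
    refine Fin.cases ?_ ?_ i
    · exact Fin.cons_zero _ _
    · intro j
      exact Fin.cons_succ _ _ _
  right_inv p := by
    obtain ⟨z, q⟩ := p
    show ((Fin.cons z q : Fin (n+1) → ℤ) 0, fun i : Fin n => (Fin.cons z q : Fin (n+1) → ℤ) i.succ) = (z, q)
    rw [Fin.cons_zero]
    exact congrArg (Prod.mk z) (funext fun i => by simp)
  map_add' f g := rfl

lemma e1_apply (f : Fin 1 → ℤ) : e1 f = f 0 := rfl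

lemma eS_apply (n : ℕ) (f : Fin (n+1) → ℤ) : eS n f = (f 0, fun i => f i.succ) := rfl

theorem dBM_ennreal : ∀ n : ℕ, 1 ≤ n → ∀ A B : Set (Fin n → ℤ),
    A.Finite → B.Finite → A.Nonempty → B.Nonempty →
    ((A.ncard : ℝ≥0∞) ^ (1/(n:ℝ)) + (B.ncard : ℝ≥0∞) ^ (1/(n:ℝ))) ^ (n:ℝ)
      ≤ ((A + B + Qcube n).ncard : ℝ≥0∞) := by
  intro n hn
  induction n, hn using Nat.le_induction with
  | base =>
    intro A B hAf hBf hAne hBne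
    set e : (Fin 1 → ℤ) ≃+ ℤ := e1 with hedef
    have hQ : ⇑e '' Qcube 1 = ({0, 1} : Set ℤ) := by
      ext z
      constructor
      · rintro ⟨f, hf, rfl⟩
        rw [hedef, e1_apply]
        rcases hf 0 with h | h <;> simp [h]
      · intro hz
        refine ⟨fun _ => z, fun i => by simpa using hz, ?_⟩
        rw [hedef, e1_apply]
    have himg : ⇑e '' (A + B + Qcube 1) = ⇑e '' A + ⇑e '' B + ({0, 1} : Set ℤ) := by
      rw [Set.image_add, Set.image_add, hQ]
    have hle := oneDim_sets (⇑e '' A) (⇑e '' B) (hAf.image _) (hBf.image _)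
      (hAne.image _) (hBne.image _)
    rw [← himg, Set.ncard_image_of_injective _ e.injective,
      Set.ncard_image_of_injective _ e.injective,
      Set.ncard_image_of_injective _ e.injective] at hle
    have h1 : ((1:ℕ):ℝ) = 1 := Nat.cast_one
    rw [h1, one_div_one, ENNReal.rpow_one, ENNReal.rpow_one, ENNReal.rpow_one]
    exact_mod_cast hle
  | succ n hn IH =>
    intro A B hAf hBf hAne hBne
    set e : (Fin (n+1) → ℤ) ≃+ ℤ × (Fin n → ℤ) := eS n with hedef
    set A' : Set (ℤ × (Fin n → ℤ)) := ⇑e '' A with hA'def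
    set B' : Set (ℤ × (Fin n → ℤ)) := ⇑e '' B with hB'def
    set C : Set (Fin (n+1) → ℤ) := A + B + Qcube (n+1) with hCdef
    set C' : Set (ℤ × (Fin n → ℤ)) := ⇑e '' C with hC'def
    have hQdec : ⇑e '' Qcube (n+1) = (({0, 1} : Set ℤ) ×ˢ Qcube n) := by
      ext p
      constructor
      · rintro ⟨f, hf, rfl⟩
        rw [hedef, eS_apply]
        constructor
        · rcases hf 0 with h | h <;> simp [h]
        · intro i
          exact hf i.succ
      · rintro ⟨h1, h2⟩
        obtain ⟨z, q⟩ := p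
        refine ⟨Fin.cons z q, ?_, ?_⟩
        · intro i
          refine Fin.cases ?_ ?_ i
          · rw [Fin.cons_zero]
            simpa using h1
          · intro j
            rw [Fin.cons_succ]
            exact h2 j
        · rw [hedef]
          show ((Fin.cons z q : Fin (n+1) → ℤ) 0,
            fun i : Fin n => (Fin.cons z q : Fin (n+1) → ℤ) i.succ) = (z, q)
          rw [Fin.cons_zero]
          exact congrArg (Prod.mk z) (funext fun i => by simp)
    have hCsum : C' = A' + B' + (({0, 1} : Set ℤ) ×ˢ Qcube n) := by
      rw [hC'def, hCdef, Set.image_add, Set.image_add, hQdec]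
    have hA'f : A'.Finite := hAf.image _
    have hB'f : B'.Finite := hBf.image _
    have hCf : C.Finite := (hAf.add hBf).add (Qcube_finite (n+1))
    have hC'f : C'.Finite := hCf.image _
    set φ : ℤ → ℝ≥0∞ := fun t => (({x | (t, x) ∈ A'}.ncard : ℕ) : ℝ≥0∞) with hφdef
    set ψ : ℤ → ℝ≥0∞ := fun s => (({x | (s, x) ∈ B'}.ncard : ℕ) : ℝ≥0∞) with hψdef
    set hfun : ℤ → ℝ≥0∞ := fun u => (({x | (u, x) ∈ C'}.ncard : ℕ) : ℝ≥0∞) with hhdef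
    set D : Finset ℤ := Finset.image Prod.fst hA'f.toFinset with hDdef
    set E : Finset ℤ := Finset.image Prod.fst hB'f.toFinset with hEdef
    set U : Finset ℤ := Finset.image Prod.fst hC'f.toFinset with hUdef
    have hDmem : ∀ t : ℤ, {x | (t, x) ∈ A'}.Nonempty → t ∈ D := by
      rintro t ⟨x, hx⟩
      exact Finset.mem_image.mpr ⟨(t, x), hA'f.mem_toFinset.mpr hx, rfl⟩
    have hEmem : ∀ s : ℤ, {x | (s, x) ∈ B'}.Nonempty → s ∈ E := by
      rintro s ⟨x, hx⟩
      exact Finset.mem_image.mpr ⟨(s, x), hB'f.mem_toFinset.mpr hx, rfl⟩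
    have hUmem : ∀ u : ℤ, {x | (u, x) ∈ C'}.Nonempty → u ∈ U := by
      rintro u ⟨x, hx⟩
      exact Finset.mem_image.mpr ⟨(u, x), hC'f.mem_toFinset.mpr hx, rfl⟩
    -- the key hypothesis, from the induction hypothesis in dimension n
    have hyp : ∀ t s : ℤ, φ t ≠ 0 → ψ s ≠ 0 →
        ((φ t ^ (1/(n:ℝ)) + ψ s ^ (1/(n:ℝ))) ^ (n:ℝ) ≤ hfun (t+s) ∧
         (φ t ^ (1/(n:ℝ)) + ψ s ^ (1/(n:ℝ))) ^ (n:ℝ) ≤ hfun (t+s+1)) := by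
      intro t s hφt hψs
      have hAt : {x | (t, x) ∈ A'}.Nonempty :=
        Set.nonempty_of_ncard_ne_zero (by
          intro h0
          exact hφt (by rw [hφdef]; simp [h0]))
      have hBs : {x | (s, x) ∈ B'}.Nonempty :=
        Set.nonempty_of_ncard_ne_zero (by
          intro h0
          exact hψs (by rw [hψdef]; simp [h0]))
      have hIH := IH {x | (t, x) ∈ A'} {x | (s, x) ∈ B'}
        (slice_finite hA'f t) (slice_finite hB'f s) hAt hBs
      have hsub : ∀ ε₀ : ℤ, ε₀ = 0 ∨ ε₀ = 1 →
          {x | (t, x) ∈ A'} + {x | (s, x) ∈ B'} + Qcube n ⊆ {x | (t+s+ε₀, x) ∈ C'} := by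
        intro ε₀ hε
        rintro _ ⟨xy, ⟨a, ha, b, hb, rfl⟩, q, hq, rfl⟩
        show (t+s+ε₀, a+b+q) ∈ C'
        rw [hCsum]
        have hqmem : ((ε₀, q) : ℤ × (Fin n → ℤ)) ∈ (({0, 1} : Set ℤ) ×ˢ Qcube n) := by
          refine ⟨?_, hq⟩
          simpa using hε
        have ha' : ((t, a) : ℤ × (Fin n → ℤ)) ∈ A' := ha
        have hb' : ((s, b) : ℤ × (Fin n → ℤ)) ∈ B' := hb
        have hmem := Set.add_mem_add (Set.add_mem_add ha' hb') hqmem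
        exact hmem
      constructor
      · have hs0 := hsub 0 (Or.inl rfl)
        rw [add_zero] at hs0
        refine le_trans hIH ?_
        rw [hhdef]
        exact_mod_cast Nat.cast_le.mpr
          (Set.ncard_le_ncard hs0 (slice_finite hC'f (t+s)))
      · have hs1 := hsub 1 (Or.inr rfl)
        refine le_trans hIH ?_
        rw [hhdef]
        exact_mod_cast Nat.cast_le.mpr
          (Set.ncard_le_ncard hs1 (slice_finite hC'f (t+s+1)))
    -- windows and masses
    have hA'ne : A'.Nonempty := hAne.image _
    have hB'ne : B'.Nonempty := hBne.image _
    have hDne : D.Nonempty := by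
      obtain ⟨p, hp⟩ := hA'ne
      exact ⟨p.1, hDmem p.1 ⟨p.2, by simpa using hp⟩⟩
    have hEne : E.Nonempty := by
      obtain ⟨p, hp⟩ := hB'ne
      exact ⟨p.1, hEmem p.1 ⟨p.2, by simpa using hp⟩⟩
    set a₁ : ℝ := ((D.min' hDne : ℤ) : ℝ) with ha₁def
    set b₁ : ℝ := ((D.max' hDne : ℤ) : ℝ) + 1 with hb₁def
    set a₂ : ℝ := ((E.min' hEne : ℤ) : ℝ) with ha₂def
    set b₂ : ℝ := ((E.max' hEne : ℤ) : ℝ) + 1 with hb₂def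
    have hcell_one : ∀ (V : Finset ℤ) (hVne : V.Nonempty) (t : ℤ), t ∈ V →
        cellVol ((V.min' hVne : ℤ) : ℝ) (((V.max' hVne : ℤ) : ℝ) + 1) t = 1 := by
      intro V hVne t ht
      rw [cellVol_eq]
      have h1 : ((V.min' hVne : ℤ) : ℝ) ≤ (t : ℝ) := Int.cast_le.mpr (V.min'_le t ht)
      have h2 : (t : ℝ) + 1 ≤ ((V.max' hVne : ℤ) : ℝ) + 1 := by
        have : (t : ℝ) ≤ ((V.max' hVne : ℤ) : ℝ) := by exact_mod_cast V.le_max' t ht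
        linarith
      rw [min_eq_right h2, max_eq_right h1]
      norm_num
    have hmass1 : mass φ D a₁ b₁ = ((A.ncard : ℕ) : ℝ≥0∞) := by
      rw [mass]
      have : ∀ t ∈ D, φ t * cellVol a₁ b₁ t = φ t := by
        intro t ht
        rw [ha₁def, hb₁def, hcell_one D hDne t ht, mul_one]
      rw [Finset.sum_congr rfl this, hφdef]
      rw [← Nat.cast_sum]
      rw [slice_sum A' hA'f D hDmem, hA'def, Set.ncard_image_of_injective _ e.injective]
    have hmass2 : mass ψ E a₂ b₂ = ((B.ncard : ℕ) : ℝ≥0∞) := by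
      rw [mass]
      have : ∀ s ∈ E, ψ s * cellVol a₂ b₂ s = ψ s := by
        intro s hs
        rw [ha₂def, hb₂def, hcell_one E hEne s hs, mul_one]
      rw [Finset.sum_congr rfl this, hψdef]
      rw [← Nat.cast_sum]
      rw [slice_sum B' hB'f E hEmem, hB'def, Set.ncard_image_of_injective _ e.injective]
    have hm1 : mass φ D a₁ b₁ ≠ 0 := by
      rw [hmass1]
      have h0 : A.ncard ≠ 0 := Nat.pos_iff_ne_zero.mp ((Set.ncard_pos hAf).mpr hAne)
      exact Nat.cast_ne_zero.mpr h0
    have hm2 : mass ψ E a₂ b₂ ≠ 0 := by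
      rw [hmass2]
      have h0 : B.ncard ≠ 0 := Nat.pos_iff_ne_zero.mp ((Set.ncard_pos hBf).mpr hBne)
      exact Nat.cast_ne_zero.mpr h0
    have hmain := oneD n hn φ ψ hfun D E (fun t => by rw [hφdef]; exact ENNReal.natCast_ne_top _)
      (fun s => by rw [hψdef]; exact ENNReal.natCast_ne_top _) hyp a₁ b₁ a₂ b₂ hm1 hm2
    have hint : ∫⁻ x in Set.Ico (a₁+a₂) (b₁+b₂), hfun ⌊x⌋ ≤ ((C.ncard : ℕ) : ℝ≥0∞) := by
      refine le_trans (lint_floor_le hfun U ?_ _ _) ?_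
      · intro u hu
        have hempty : {x | (u, x) ∈ C'} = ∅ := by
          by_contra hne
          exact hu (hUmem u (Set.nonempty_iff_ne_empty.mpr hne))
        rw [hhdef]
        simp [hempty]
      · rw [hhdef, ← Nat.cast_sum, slice_sum C' hC'f U hUmem, hC'def,
          Set.ncard_image_of_injective _ e.injective]
    rw [hmass1, hmass2] at hmain
    have hfinal := le_trans hmain hint
    have hcast : ((n+1 : ℕ) : ℝ) = (n : ℝ) + 1 := by push_cast; ring
    rw [hcast]
    exact hfinal

end Main
open scoped Pointwise

/-- Discrete Brunn–Minkowski inequality for cardinalities of finite sets of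
integer points (with the vertex set `{0,1}ⁿ` of the unit cube added). -/
theorem discrete_BrunnMinkowski_cardinality (n : ℕ) (hn : 1 ≤ n)
    (A B : Set (Fin n → ℤ)) (hAf : A.Finite) (hBf : B.Finite)
    (hAne : A.Nonempty) (hBne : B.Nonempty) :
    (A.ncard : ℝ) ^ (1 / (n : ℝ)) + (B.ncard : ℝ) ^ (1 / (n : ℝ)) ≤
      (((A + B + {ε : Fin n → ℤ | ∀ i, ε i = 0 ∨ ε i = 1}).ncard : ℝ)) ^ (1 / (n : ℝ)) := by
  have key := dBM_ennreal n hn A B hAf hBf hAne hBne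
  have hn0 : (n:ℝ) ≠ 0 := Nat.cast_ne_zero.mpr (by omega)
  have h2 : ((A.ncard : ℝ≥0∞) ^ (1/(n:ℝ)) + (B.ncard : ℝ≥0∞) ^ (1/(n:ℝ)))
      ≤ (((A + B + Qcube n).ncard : ℝ≥0∞)) ^ (1/(n:ℝ)) := by
    have h3 := ENNReal.rpow_le_rpow key (by positivity : (0:ℝ) ≤ 1/(n:ℝ))
    rwa [← ENNReal.rpow_mul, mul_one_div_cancel hn0, ENNReal.rpow_one] at h3
  have hfin1 : ((A.ncard : ℝ≥0∞)) ^ (1/(n:ℝ)) ≠ ⊤ :=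
    ENNReal.rpow_ne_top_of_nonneg (by positivity) (ENNReal.natCast_ne_top _)
  have hfin2 : ((B.ncard : ℝ≥0∞)) ^ (1/(n:ℝ)) ≠ ⊤ :=
    ENNReal.rpow_ne_top_of_nonneg (by positivity) (ENNReal.natCast_ne_top _)
  have hmono := ENNReal.toReal_mono
    (ENNReal.rpow_ne_top_of_nonneg (by positivity) (ENNReal.natCast_ne_top _)) h2
  rw [ENNReal.toReal_add hfin1 hfin2, ← ENNReal.toReal_rpow, ← ENNReal.toReal_rpow,
    ← ENNReal.toReal_rpow] at hmono
  simpa [Qcube] using hmono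
end
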